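/- arXiv:2302.04404 — 9 statements merged into one kernel-verified Lean document; each statement's English description precedes it below -/
import Mathlib

section
/- For every permutation w of {1,…,n}, the cost of w equals half of its total displacement: $(w) = tvd(w)/2. -/
/-- Total displacement of a permutation of `{1,…,n}` (modeled on `Fin n`):
`tvd(w) = ∑ᵢ |w(i) − i|`. -/
def tvdA (n : ℕ) (w : Equiv.Perm (Fin n)) : ℕ :=
  ∑ i : Fin n, (((w i : ℕ) : ℤ) - ((i : ℕ) : ℤ)).natAbs

/-- The cost of a permutation `w` of `{1,…,n}`: the minimum, over all factorizations
`w = t₁ ⋯ t_k` into transpositions `tᵢ = (xᵢ yᵢ)`, of `∑ᵢ |xᵢ − yᵢ|`. -/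
noncomputable def costA (n : ℕ) (w : Equiv.Perm (Fin n)) : ℕ :=
  sInf {c : ℕ | ∃ L : List (Fin n × Fin n),
    (∀ p ∈ L, p.1 ≠ p.2) ∧
    (L.map fun p => Equiv.swap p.1 p.2).prod = w ∧
    c = (L.map fun p => (((p.1 : ℕ) : ℤ) - ((p.2 : ℕ) : ℤ)).natAbs).sum}

namespace CostTvdAux

open Equiv Finset

/-- Multiplying by a swap increases tvd by at most twice the cost of the swap. -/
lemma tvd_swap_mul_le (n : ℕ) (a b : Fin n) (u : Equiv.Perm (Fin n)) :
    tvdA n (Equiv.swap a b * u) ≤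
      tvdA n u + 2 * (((a : ℕ) : ℤ) - ((b : ℕ) : ℤ)).natAbs := by
  classical
  set g : Fin n → ℕ := fun x => (((Equiv.swap a b x : ℕ) : ℤ) - ((x : ℕ) : ℤ)).natAbs with hg
  have h1 : tvdA n (Equiv.swap a b * u) ≤
      ∑ i : Fin n, ((((u i : ℕ) : ℤ) - ((i : ℕ) : ℤ)).natAbs + g (u i)) := by
    unfold tvdA
    refine Finset.sum_le_sum fun i _ => ?_
    have : Equiv.swap a b (u i) = (Equiv.swap a b * u) i := rfl
    rw [← this]
    have := Int.natAbs_add_le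
      (((u i : ℕ) : ℤ) - ((i : ℕ) : ℤ))
      (((Equiv.swap a b (u i) : ℕ) : ℤ) - ((u i : ℕ) : ℤ))
    simp only [hg]
    omega
  have h2 : ∑ i : Fin n, g (u i) = ∑ i : Fin n, g i := Equiv.sum_comp u g
  have h3 : ∑ i : Fin n, g i = 2 * (((a : ℕ) : ℤ) - ((b : ℕ) : ℤ)).natAbs := by
    have hsub : (∑ i : Fin n, g i) = ∑ i ∈ ({a, b} : Finset (Fin n)), g i := by
      refine (Finset.sum_subset (Finset.subset_univ _) ?_).symm
      intro x _ hx
      simp only [Finset.mem_insert, Finset.mem_singleton, not_or] at hx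
      simp [hg, Equiv.swap_apply_of_ne_of_ne hx.1 hx.2]
    rw [hsub]
    by_cases hab : a = b
    · subst hab
      simp [hg]
    · rw [Finset.sum_pair hab]
      simp only [hg, Equiv.swap_apply_left, Equiv.swap_apply_right]
      omega
  calc tvdA n (Equiv.swap a b * u)
      ≤ ∑ i : Fin n, ((((u i : ℕ) : ℤ) - ((i : ℕ) : ℤ)).natAbs + g (u i)) := h1
    _ = tvdA n u + ∑ i : Fin n, g (u i) := by rw [Finset.sum_add_distrib]; rfl
    _ = tvdA n u + 2 * (((a : ℕ) : ℤ) - ((b : ℕ) : ℤ)).natAbs := by rw [h2, h3]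

/-- Lower bound: any factorization into swaps costs at least tvd/2. -/
lemma tvd_le_two_mul_cost (n : ℕ) (L : List (Fin n × Fin n)) :
    tvdA n (L.map fun p => Equiv.swap p.1 p.2).prod ≤
      2 * (L.map fun p => (((p.1 : ℕ) : ℤ) - ((p.2 : ℕ) : ℤ)).natAbs).sum := by
  induction L with
  | nil =>
    simp [tvdA]
  | cons p L ih =>
    simp only [List.map_cons, List.prod_cons, List.sum_cons]
    calc tvdA n (Equiv.swap p.1 p.2 * (L.map fun p => Equiv.swap p.1 p.2).prod)
        ≤ tvdA n (L.map fun p => Equiv.swap p.1 p.2).prod +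
            2 * (((p.1 : ℕ) : ℤ) - ((p.2 : ℕ) : ℤ)).natAbs := tvd_swap_mul_le n _ _ _
      _ ≤ 2 * (L.map fun p => (((p.1 : ℕ) : ℤ) - ((p.2 : ℕ) : ℤ)).natAbs).sum +
            2 * (((p.1 : ℕ) : ℤ) - ((p.2 : ℕ) : ℤ)).natAbs := by
            exact Nat.add_le_add_right ih _
      _ = 2 * ((((p.1 : ℕ) : ℤ) - ((p.2 : ℕ) : ℤ)).natAbs +
            (L.map fun p => (((p.1 : ℕ) : ℤ) - ((p.2 : ℕ) : ℤ)).natAbs).sum) := by ring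

lemma tvd_eq_zero (n : ℕ) (w : Equiv.Perm (Fin n)) (h : tvdA n w = 0) : w = 1 := by
  have := Finset.sum_eq_zero_iff.mp h
  ext i
  have hi := this i (Finset.mem_univ i)
  have hi' := Int.natAbs_eq_zero.mp hi
  simp only [Equiv.Perm.one_apply]
  omega

/-- The key combinatorial lemma: a non-identity permutation has a "crossing pair". -/
lemma exists_crossing (n : ℕ) (w : Equiv.Perm (Fin n)) (hw : w ≠ 1) :
    ∃ a b : Fin n, (a : ℕ) < (b : ℕ) ∧ (b : ℕ) ≤ (w a : ℕ) ∧ (w b : ℕ) ≤ (a : ℕ) := by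
  classical
  -- first: there exists j with w j < j
  have hT : (Finset.univ.filter fun j : Fin n => (w j : ℕ) < (j : ℕ)).Nonempty := by
    by_contra h
    apply hw
    have hge : ∀ j : Fin n, (j : ℕ) ≤ (w j : ℕ) := by
      intro j
      by_contra hj
      exact h ⟨j, Finset.mem_filter.mpr ⟨Finset.mem_univ j, by omega⟩⟩
    have hsum : ∑ j : Fin n, (j : ℕ) = ∑ j : Fin n, (w j : ℕ) :=
      (Equiv.sum_comp w (fun j : Fin n => (j : ℕ))).symm
    have := (Finset.sum_eq_sum_iff_of_le (fun j _ => hge j)).mp hsum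
    ext i
    exact ((this i (Finset.mem_univ i)).symm : (w i : ℕ) = i)
  set T := Finset.univ.filter fun j : Fin n => (w j : ℕ) < (j : ℕ) with hTdef
  set b := T.min' hT with hbdef
  have hbT : b ∈ T := T.min'_mem hT
  have hb : (w b : ℕ) < (b : ℕ) := (Finset.mem_filter.mp hbT).2
  have hbmin : ∀ j : Fin n, (j : ℕ) < (b : ℕ) → (j : ℕ) ≤ (w j : ℕ) := by
    intro j hj
    by_contra hj'
    have : j ∈ T := Finset.mem_filter.mpr ⟨Finset.mem_univ j, by omega⟩
    have := T.min'_le j this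
    rw [Fin.le_def] at this
    omega
  -- second: there exists a < b with w a ≥ b (pigeonhole)
  have hA : (Finset.univ.filter fun j : Fin n =>
      (j : ℕ) < (b : ℕ) ∧ (b : ℕ) ≤ (w j : ℕ)).Nonempty := by
    by_contra h
    have hsmall : ∀ j : Fin n, (j : ℕ) ≤ (b : ℕ) → (w j : ℕ) < (b : ℕ) := by
      intro j hj
      rcases eq_or_lt_of_le hj with heq | hlt
      · have : j = b := Fin.ext heq
        subst this; exact hb
      · by_contra hj'
        exact h ⟨j, Finset.mem_filter.mpr ⟨Finset.mem_univ j, hlt, by omega⟩⟩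
    have hmaps : ∀ j ∈ Finset.Iic b, w j ∈ Finset.Iio b := by
      intro j hj
      rw [Finset.mem_Iic, Fin.le_def] at hj
      rw [Finset.mem_Iio, Fin.lt_def]
      exact hsmall j hj
    have hcard := Finset.card_le_card_of_injOn w hmaps
      (Set.injOn_of_injective w.injective)
    rw [Fin.card_Iic, Fin.card_Iio] at hcard
    omega
  set A := Finset.univ.filter fun j : Fin n =>
      (j : ℕ) < (b : ℕ) ∧ (b : ℕ) ≤ (w j : ℕ) with hAdef
  set a := A.max' hA with hadef
  have haA : a ∈ A := A.max'_mem hA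
  have hab : (a : ℕ) < (b : ℕ) := (Finset.mem_filter.mp haA).2.1
  have hwa : (b : ℕ) ≤ (w a : ℕ) := (Finset.mem_filter.mp haA).2.2
  have hamax : ∀ j : Fin n, (j : ℕ) < (b : ℕ) → (b : ℕ) ≤ (w j : ℕ) → (j : ℕ) ≤ (a : ℕ) := by
    intro j h1 h2
    have : j ∈ A := Finset.mem_filter.mpr ⟨Finset.mem_univ j, h1, h2⟩
    have := A.le_max' j this
    rwa [Fin.le_def] at this
  refine ⟨a, b, hab, hwa, ?_⟩
  -- show w b ≤ a
  by_contra h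
  push_neg at h
  -- w maps Ioo a b into itself
  have hmaps : ∀ j ∈ Finset.Ioo a b, w j ∈ Finset.Ioo a b := by
    intro j hj
    rw [Finset.mem_Ioo, Fin.lt_def, Fin.lt_def] at hj
    rw [Finset.mem_Ioo, Fin.lt_def, Fin.lt_def]
    have h1 : (j : ℕ) ≤ (w j : ℕ) := hbmin j hj.2
    have h2 : (w j : ℕ) < (b : ℕ) := by
      by_contra h2
      have := hamax j hj.2 (by omega)
      omega
    exact ⟨by omega, h2⟩
  have himg : Finset.image w (Finset.Ioo a b) = Finset.Ioo a b := by
    apply Finset.eq_of_subset_of_card_le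
    · intro x hx
      rcases Finset.mem_image.mp hx with ⟨j, hj, rfl⟩
      exact hmaps j hj
    · rw [Finset.card_image_of_injective _ w.injective]
  have hwb : w b ∈ Finset.Ioo a b := by
    rw [Finset.mem_Ioo, Fin.lt_def, Fin.lt_def]
    exact ⟨h, hb⟩
  rw [← himg] at hwb
  rcases Finset.mem_image.mp hwb with ⟨j, hj, hjb⟩
  have : j = b := w.injective hjb
  subst this
  rw [Finset.mem_Ioo, Fin.lt_def] at hj
  omega

/-- The descent step: multiplying by the crossing swap decreases tvd by exactly `2(b-a)`. -/
lemma tvd_descent (n : ℕ) (w : Equiv.Perm (Fin n)) (a b : Fin n)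
    (hab : (a : ℕ) < (b : ℕ)) (hwa : (b : ℕ) ≤ (w a : ℕ)) (hwb : (w b : ℕ) ≤ (a : ℕ)) :
    tvdA n w = tvdA n (w * Equiv.swap a b) + 2 * ((b : ℕ) - (a : ℕ)) := by
  classical
  have hne : a ≠ b := fun h => by rw [h] at hab; omega
  set τ := Equiv.swap a b with hτ
  set F : Fin n → ℕ := fun j => (((w j : ℕ) : ℤ) - ((τ j : ℕ) : ℤ)).natAbs with hF
  have hre : tvdA n (w * τ) = ∑ j : Fin n, F j := by
    unfold tvdA
    rw [← Equiv.sum_comp τ F]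
    refine Finset.sum_congr rfl fun i _ => ?_
    simp only [hF, hτ, Equiv.Perm.mul_apply, Equiv.swap_apply_self]
  set δ : Fin n → ℕ := fun i =>
    (if i = a then (b : ℕ) - (a : ℕ) else 0) + (if i = b then (b : ℕ) - (a : ℕ) else 0)
    with hδ
  have hpoint : ∀ i : Fin n, (((w i : ℕ) : ℤ) - ((i : ℕ) : ℤ)).natAbs = F i + δ i := by
    intro i
    by_cases hia : i = a
    · have h1 : τ i = b := by rw [hτ, hia]; exact Equiv.swap_apply_left _ _
      have h2 : δ i = (b : ℕ) - (a : ℕ) := by simp [hδ, hia, hne]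
      simp only [hF]
      rw [h1, h2, hia]
      omega
    · by_cases hib : i = b
      · have h1 : τ i = a := by rw [hτ, hib]; exact Equiv.swap_apply_right _ _
        have h2 : δ i = (b : ℕ) - (a : ℕ) := by simp [hδ, hia, hib, Ne.symm hne]
        simp only [hF]
        rw [h1, h2, hib]
        omega
      · have h1 : τ i = i := by rw [hτ]; exact Equiv.swap_apply_of_ne_of_ne hia hib
        have h2 : δ i = 0 := by simp [hδ, hia, hib]
        simp only [hF]
        rw [h1, h2]
        omega
  have hδsum : ∑ i : Fin n, δ i = 2 * ((b : ℕ) - (a : ℕ)) := by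
    simp only [hδ]
    rw [Finset.sum_add_distrib, Finset.sum_ite_eq' Finset.univ a fun _ => (b : ℕ) - (a : ℕ),
      Finset.sum_ite_eq' Finset.univ b fun _ => (b : ℕ) - (a : ℕ)]
    simp
    omega
  calc tvdA n w = ∑ i : Fin n, (F i + δ i) :=
        Finset.sum_congr rfl fun i _ => hpoint i
    _ = (∑ i : Fin n, F i) + ∑ i : Fin n, δ i := Finset.sum_add_distrib
    _ = tvdA n (w * τ) + 2 * ((b : ℕ) - (a : ℕ)) := by rw [hre, hδsum]

/-- Upper bound: every permutation has a factorization of cost exactly tvd/2. -/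
lemma exists_factorization (n : ℕ) : ∀ m : ℕ, ∀ w : Equiv.Perm (Fin n), tvdA n w ≤ m →
    ∃ L : List (Fin n × Fin n),
      (∀ p ∈ L, p.1 ≠ p.2) ∧
      (L.map fun p => Equiv.swap p.1 p.2).prod = w ∧
      2 * (L.map fun p => (((p.1 : ℕ) : ℤ) - ((p.2 : ℕ) : ℤ)).natAbs).sum = tvdA n w := by
  intro m
  induction m with
  | zero =>
    intro w hw
    have : w = 1 := tvd_eq_zero n w (Nat.le_zero.mp hw)
    subst this
    exact ⟨[], by simp, by simp, by simp [tvdA]⟩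
  | succ m ih =>
    intro w hw
    by_cases hw1 : w = 1
    · subst hw1
      exact ⟨[], by simp, by simp, by simp [tvdA]⟩
    · obtain ⟨a, b, hab, hwa, hwb⟩ := exists_crossing n w hw1
      have hdesc := tvd_descent n w a b hab hwa hwb
      have hlt : tvdA n (w * Equiv.swap a b) ≤ m := by omega
      obtain ⟨L, hL1, hL2, hL3⟩ := ih (w * Equiv.swap a b) hlt
      refine ⟨L ++ [(a, b)], ?_, ?_, ?_⟩
      · intro p hp
        rcases List.mem_append.mp hp with h | h
        · exact hL1 p h
        · rcases List.mem_singleton.mp h with rfl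
          have hne : a ≠ b := fun h' => by rw [h'] at hab; exact lt_irrefl _ hab
          exact hne
      · rw [List.map_append, List.prod_append, hL2]
        simp only [List.map_cons, List.map_nil, List.prod_cons, List.prod_nil, mul_one]
        rw [mul_assoc, Equiv.swap_mul_self, mul_one]
      · rw [List.map_append, List.sum_append]
        simp only [List.map_cons, List.map_nil, List.sum_cons, List.sum_nil]
        have : ((((a : ℕ) : ℤ) - ((b : ℕ) : ℤ)).natAbs) = (b : ℕ) - (a : ℕ) := by omega
        omega

end CostTvdAux

/-- For every permutation `w` of `{1,…,n}`, the cost of `w` equals half of its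
total displacement: `$(w) = tvd(w)/2`. -/
theorem cost_eq_half_tvd_typeA (n : ℕ) (w : Equiv.Perm (Fin n)) :
    2 * costA n w = tvdA n w := by
  classical
  obtain ⟨L₀, hL₀1, hL₀2, hL₀3⟩ :=
    CostTvdAux.exists_factorization n (tvdA n w) w le_rfl
  set S := {c : ℕ | ∃ L : List (Fin n × Fin n),
    (∀ p ∈ L, p.1 ≠ p.2) ∧
    (L.map fun p => Equiv.swap p.1 p.2).prod = w ∧
    c = (L.map fun p => (((p.1 : ℕ) : ℤ) - ((p.2 : ℕ) : ℤ)).natAbs).sum} with hS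
  have hmem : (L₀.map fun p => (((p.1 : ℕ) : ℤ) - ((p.2 : ℕ) : ℤ)).natAbs).sum ∈ S :=
    ⟨L₀, hL₀1, hL₀2, rfl⟩
  have hne : S.Nonempty := ⟨_, hmem⟩
  have hinf_mem : sInf S ∈ S := Nat.sInf_mem hne
  obtain ⟨L, hL1, hL2, hL3⟩ := hinf_mem
  have hlow : tvdA n w ≤ 2 * sInf S := by
    rw [hL3, ← hL2]
    exact CostTvdAux.tvd_le_two_mul_cost n L
  have hup : sInf S ≤ (L₀.map fun p => (((p.1 : ℕ) : ℤ) - ((p.2 : ℕ) : ℤ)).natAbs).sum :=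
    Nat.sInf_le hmem
  have : costA n w = sInf S := rfl
  rw [this]
  omega
end

section
/- For every signed permutation w in the hyperoctahedral group S^B_n, the cost of w equals half of its total displacement: $(w) = tvd(w)/2. -/
/-!
Lower bound: the displacement `∑_{|i| ≤ n} |w i - i|` over both signs is subadditive, equals
`4 $(t)` on a transposition `t` and `2 tvd(w)` on a signed permutation `w`.
Upper bound: unless `w = 1`, either some `i > 0` has `w i ≤ -i`, and `(i -i)` lowers `tvd` by
`2i`, or some `0 < a < b` has `b ≤ w a` and `w b ≤ a`, and `(a b)(-a -b)` lowers `tvd` by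
`2(b - a)`; induct on `tvd`.
-/

/-- A signed permutation in the hyperoctahedral group `S^B_n`: a bijection of `ℤ`
that satisfies `w(i) = −w(−i)` and fixes every integer outside `{±1,…,±n}`
(this models the bijections of `{±1,…,±n}` with that symmetry). -/
def IsSignedPerm (n : ℕ) (w : Equiv.Perm ℤ) : Prop :=
  (∀ i : ℤ, w (-i) = - w i) ∧ (∀ i : ℤ, (n : ℤ) < |i| → w i = i)

/-- Total displacement: `tvd(w) = ∑_{i=1}^n |w(i) − i|`. -/
noncomputable def tvdB (n : ℕ) (w : Equiv.Perm ℤ) : ℕ :=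
  ∑ i ∈ Finset.Icc (1 : ℤ) (n : ℤ), (w i - i).natAbs

/-- `t` is a transposition of `S^B_n` of cost `c`: either `t = (i j)(−i −j)` for distinct
`i, j ∈ {±1,…,±n}` with `j ≠ −i`, of cost `|i − j|`; or `t = (i −i)` for
`i ∈ {±1,…,±n}`, of cost `|i|`. -/
def IsBTransp (n : ℕ) (t : Equiv.Perm ℤ) (c : ℕ) : Prop :=
  (∃ i j : ℤ, i ≠ 0 ∧ j ≠ 0 ∧ |i| ≤ (n : ℤ) ∧ |j| ≤ (n : ℤ) ∧ i ≠ j ∧ j ≠ -i ∧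
    t = Equiv.swap i j * Equiv.swap (-i) (-j) ∧ c = (i - j).natAbs) ∨
  (∃ i : ℤ, i ≠ 0 ∧ |i| ≤ (n : ℤ) ∧ t = Equiv.swap i (-i) ∧ c = i.natAbs)

/-- The cost of `w ∈ S^B_n`: the minimum of `$(t₁) + ⋯ + $(t_k)` over all factorizations
`w = t₁ ⋯ t_k` into transpositions of `S^B_n`. -/
noncomputable def costB (n : ℕ) (w : Equiv.Perm ℤ) : ℕ :=
  sInf {c : ℕ | ∃ L : List (Equiv.Perm ℤ × ℕ),
    (∀ p ∈ L, IsBTransp n p.1 p.2) ∧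
    (L.map Prod.fst).prod = w ∧ c = (L.map Prod.snd).sum}

open Equiv Finset

theorem Equiv.Perm.mem_of_apply_mem_of_mapsTo {α : Type*} {σ : Perm α} {s : Finset α}
    (hs : ∀ a ∈ s, σ a ∈ s) {x : α} (hx : σ x ∈ s) : x ∈ s := by
  have hmap : s.map σ.toEmbedding = s := map_eq_of_subset fun y hy => by
    obtain ⟨a, ha, rfl⟩ := mem_map.mp hy
    exact hs a ha
  rw [← hmap] at hx
  obtain ⟨a, ha, hax⟩ := mem_map.mp hx
  rwa [← σ.injective hax]

theorem swap_mul_swap_neg_apply {a b : ℤ} (ha : a ≠ 0) (hb : b ≠ 0) (hab : a ≠ b)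
    (hnab : b ≠ -a) (x : ℤ) :
    (swap a b * swap (-a) (-b)) x =
      if x = a then b else if x = b then a else if x = -a then -b else if x = -b then -a else x := by
  simp only [Perm.mul_apply, swap_apply_def]
  split_ifs <;> omega

namespace IsSignedPerm

variable {n : ℕ} {u v w : Perm ℤ}

theorem apply_zero (hw : IsSignedPerm n w) : w 0 = 0 := by
  have := hw.1 0
  rw [neg_zero] at this
  omega

theorem abs_apply_le (hw : IsSignedPerm n w) {x : ℤ} (hx : |x| ≤ n) : |w x| ≤ n := by
  by_contra! h
  rw [w.injective (hw.2 _ h)] at h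
  omega

theorem mul (hu : IsSignedPerm n u) (hv : IsSignedPerm n v) : IsSignedPerm n (u * v) :=
  ⟨fun i => by rw [Perm.mul_apply, Perm.mul_apply, hv.1, hu.1],
    fun i hi => by rw [Perm.mul_apply, hv.2 i hi, hu.2 i hi]⟩

theorem one : IsSignedPerm n 1 := ⟨fun _ => rfl, fun _ _ => rfl⟩

theorem eq_one_of_forall_apply_eq (hw : IsSignedPerm n w)
    (h : ∀ i, 1 ≤ i → i ≤ (n : ℤ) → w i = i) : w = 1 := by
  ext x
  rcases lt_or_ge (n : ℤ) |x| with hx | hx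
  · exact hw.2 x hx
  rw [abs_le] at hx
  rcases lt_trichotomy x 0 with hneg | rfl | hpos
  · rw [Perm.one_apply, ← neg_neg x, hw.1, h (-x) (by omega) (by omega)]
  · exact hw.apply_zero
  · exact h x hpos hx.2

end IsSignedPerm

namespace IsBTransp

variable {n : ℕ} {t : Perm ℤ} {c : ℕ}

theorem isSignedPerm (h : IsBTransp n t c) : IsSignedPerm n t := by
  rcases h with ⟨a, b, ha, hb, han, hbn, hab, hnab, rfl, -⟩ | ⟨a, -, han, rfl, -⟩
  · rw [abs_le] at han hbn
    refine ⟨fun x => ?_, fun x hx => ?_⟩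
    all_goals
      simp only [swap_mul_swap_neg_apply ha hb hab hnab]
      try rw [lt_abs] at hx
      split_ifs <;> omega
  · rw [abs_le] at han
    refine ⟨fun x => ?_, fun x hx => ?_⟩
    all_goals
      simp only [swap_apply_def]
      try rw [lt_abs] at hx
      split_ifs <;> omega

theorem mul_self (h : IsBTransp n t c) : t * t = 1 := by
  ext x
  rcases h with ⟨a, b, ha, hb, -, -, hab, hnab, rfl, -⟩ | ⟨a, -, -, rfl, -⟩
  · simp only [Perm.mul_apply, Perm.one_apply, swap_mul_swap_neg_apply ha hb hab hnab]
    split_ifs <;> omega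
  · simp only [Perm.mul_apply, Perm.one_apply, swap_apply_def]
    split_ifs <;> omega

theorem cost_pos (h : IsBTransp n t c) : 0 < c := by
  rcases h with ⟨a, b, -, -, -, -, hab, -, -, rfl⟩ | ⟨a, ha, -, -, rfl⟩ <;> omega

end IsBTransp

noncomputable def fullDisp (n : ℕ) (w : Perm ℤ) : ℕ :=
  ∑ i ∈ Icc (-(n : ℤ)) n, (w i - i).natAbs

theorem fullDisp_eq_two_mul_tvdB {n : ℕ} {w : Perm ℤ} (hw : ∀ i, w (-i) = -w i) :
    fullDisp n w = 2 * tvdB n w := by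
  have hsplit : Icc (-(n : ℤ)) n = (Icc (-(n : ℤ)) (-1) ∪ {0}) ∪ Icc 1 (n : ℤ) := by
    ext x; simp only [mem_Icc, mem_union, mem_singleton]; omega
  have hneg : ∑ i ∈ Icc (-(n : ℤ)) (-1), (w i - i).natAbs = tvdB n w := by
    refine sum_nbij' (fun a => -a) (fun a => -a) ?_ ?_ (fun a _ => neg_neg a)
      (fun a _ => neg_neg a) fun a _ => ?_
    · intro a ha; simp only [mem_Icc] at *; omega
    · intro a ha; simp only [mem_Icc] at *; omega
    · rw [hw]; omega
  have hzero : w 0 = 0 := by have := hw 0; rw [neg_zero] at this; omega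
  rw [fullDisp, hsplit, sum_union, sum_union, hneg, sum_singleton, hzero, tvdB]
  · omega
  all_goals rw [disjoint_left]; intro x; simp only [mem_Icc, mem_union, mem_singleton]; omega

theorem fullDisp_mul_le {n : ℕ} (u : Perm ℤ) {v : Perm ℤ} (hv : ∀ x, (n : ℤ) < |x| → v x = x) :
    fullDisp n (u * v) ≤ fullDisp n u + fullDisp n v := by
  have hsupp : {x | v x ≠ x} ⊆ (Icc (-(n : ℤ)) n : Set ℤ) := fun x hx => by
    by_contra h
    simp only [coe_Icc, Set.mem_Icc] at h
    exact hx (hv x (by rw [lt_abs]; omega))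
  calc fullDisp n (u * v)
      ≤ ∑ x ∈ Icc (-(n : ℤ)) n, ((u (v x) - v x).natAbs + (v x - x).natAbs) :=
        sum_le_sum fun x _ => by
          rw [Perm.mul_apply, ← sub_add_sub_cancel (u (v x)) (v x) x]
          exact Int.natAbs_add_le _ _
    _ = fullDisp n u + fullDisp n v := by
        rw [sum_add_distrib, Perm.sum_comp v _ (fun y => (u y - y).natAbs) hsupp]
        rfl

theorem fullDisp_eq_sum_of_subset {n : ℕ} {t : Perm ℤ} {s : Finset ℤ}
    (hs : s ⊆ Icc (-(n : ℤ)) n) (ht : ∀ x ∉ s, t x = x) :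
    fullDisp n t = ∑ x ∈ s, (t x - x).natAbs :=
  (sum_subset hs fun x _ hx => by rw [ht x hx, sub_self, Int.natAbs_zero]).symm

theorem IsBTransp.fullDisp_eq {n : ℕ} {t : Perm ℤ} {c : ℕ} (h : IsBTransp n t c) :
    fullDisp n t = 4 * c := by
  rcases h with ⟨a, b, ha, hb, han, hbn, hab, hnab, rfl, rfl⟩ | ⟨a, ha, han, rfl, rfl⟩
  · rw [abs_le] at han hbn
    have ht := swap_mul_swap_neg_apply ha hb hab hnab
    rw [fullDisp_eq_sum_of_subset (s := {a, b, -a, -b}) (fun x hx => by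
        simp only [mem_insert, mem_singleton] at hx; rw [mem_Icc]; omega)
      (fun x hx => by
        simp only [mem_insert, mem_singleton, not_or] at hx; rw [ht]; split_ifs <;> omega),
      sum_insert (by simp only [mem_insert, mem_singleton]; omega),
      sum_insert (by simp only [mem_insert, mem_singleton]; omega),
      sum_insert (by simp only [mem_singleton]; omega), sum_singleton]
    simp only [ht]
    split_ifs <;> omega
  · rw [abs_le] at han
    rw [fullDisp_eq_sum_of_subset (s := {a, -a}) (fun x hx => by
        simp only [mem_insert, mem_singleton] at hx; rw [mem_Icc]; omega)
      (fun x hx => by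
        simp only [mem_insert, mem_singleton, not_or] at hx; rw [swap_apply_of_ne_of_ne hx.1 hx.2]),
      sum_pair (by omega), swap_apply_left, swap_apply_right]
    omega

theorem fullDisp_prod_le {n : ℕ} (L : List (Perm ℤ × ℕ)) (hL : ∀ p ∈ L, IsBTransp n p.1 p.2) :
    fullDisp n (L.map Prod.fst).prod ≤ 4 * (L.map Prod.snd).sum := by
  induction L with
  | nil => simp [fullDisp]
  | cons p L ih =>
    have hp := hL p List.mem_cons_self
    have hL' : ∀ q ∈ L, IsBTransp n q.1 q.2 := fun q hq => hL q (List.mem_cons_of_mem _ hq)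
    have htail : IsSignedPerm n (L.map Prod.fst).prod :=
      List.prod_induction _ (fun _ _ => IsSignedPerm.mul) IsSignedPerm.one fun t ht => by
        obtain ⟨q, hq, rfl⟩ := List.mem_map.mp ht
        exact (hL' q hq).isSignedPerm
    simp only [List.map_cons, List.prod_cons, List.sum_cons]
    have := fullDisp_mul_le p.1 htail.2
    rw [hp.fullDisp_eq] at this
    linarith [ih hL']

theorem tvdB_add_sum_eq_of_eqOn {n : ℕ} {u v : Perm ℤ} {s : Finset ℤ} (hs : s ⊆ Icc 1 (n : ℤ))
    (huv : ∀ i ∈ Icc 1 (n : ℤ), i ∉ s → u i = v i) :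
    tvdB n u + ∑ i ∈ s, (v i - i).natAbs = tvdB n v + ∑ i ∈ s, (u i - i).natAbs := by
  rw [tvdB, tvdB, ← sum_sdiff hs, ← sum_sdiff hs (f := fun i => (v i - i).natAbs),
    sum_congr rfl fun i hi => by rw [huv i (mem_sdiff.mp hi).1 (mem_sdiff.mp hi).2]]
  ring

theorem tvdB_mul_swap_neg_add {n : ℕ} {w : Perm ℤ} (hw : IsSignedPerm n w) {i : ℤ}
    (hi : 1 ≤ i) (hin : i ≤ n) (hwi : w i ≤ -i) :
    tvdB n (w * swap i (-i)) + 2 * i.natAbs = tvdB n w := by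
  have key := tvdB_add_sum_eq_of_eqOn (n := n) (u := w * swap i (-i)) (v := w) (s := {i})
    (by simp only [singleton_subset_iff, mem_Icc]; omega) fun x hx hxi => by
      rw [mem_Icc] at hx; rw [mem_singleton] at hxi
      rw [Perm.mul_apply, swap_apply_of_ne_of_ne hxi (by omega)]
  rw [sum_singleton, sum_singleton, Perm.mul_apply, swap_apply_left, hw.1] at key
  omega

theorem tvdB_mul_swap_mul_swap_neg_add {n : ℕ} {w : Perm ℤ} {a b : ℤ}
    (ha : 1 ≤ a) (hab : a < b) (hbn : b ≤ n) (hwa : b ≤ w a) (hwb : w b ≤ a) :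
    tvdB n (w * (swap a b * swap (-a) (-b))) + 2 * (a - b).natAbs = tvdB n w := by
  have ht := swap_mul_swap_neg_apply (a := a) (b := b) (by omega) (by omega) (by omega) (by omega)
  have key := tvdB_add_sum_eq_of_eqOn (n := n) (u := w * (swap a b * swap (-a) (-b))) (v := w)
    (s := {a, b}) (fun x hx => by
      simp only [mem_insert, mem_singleton] at hx; rw [mem_Icc]; omega) fun x hx hxs => by
      simp only [mem_Icc] at hx; simp only [mem_insert, mem_singleton, not_or] at hxs
      rw [Perm.mul_apply, ht]; split_ifs <;> omega
  rw [sum_pair hab.ne, sum_pair hab.ne] at key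
  simp only [Perm.mul_apply, ht, if_pos, if_neg hab.ne'] at key
  omega

namespace IsSignedPerm

variable {n : ℕ} {w : Perm ℤ}

theorem apply_eq_of_forall_le (hw : IsSignedPerm n w) (h : ∀ i, 1 ≤ i → i ≤ (n : ℤ) → i ≤ w i)
    {i : ℤ} (hi : 1 ≤ i) (hin : i ≤ n) : w i = i := by
  have hmaps : ∀ k ≥ 1, ∀ a ∈ Icc k (n : ℤ), w a ∈ Icc k (n : ℤ) := fun k hk a ha => by
    rw [mem_Icc] at ha ⊢
    have := h a (by omega) ha.2
    have := hw.abs_apply_le (x := a) (by rw [abs_le]; omega)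
    rw [abs_le] at this
    omega
  have hwi := mem_Icc.mp (hmaps i hi i (by rw [mem_Icc]; omega))
  by_contra hne
  have := mem_Icc.mp
    (Perm.mem_of_apply_mem_of_mapsTo (hmaps (i + 1) (by omega)) (mem_Icc.mpr ⟨by omega, hwi.2⟩))
  omega

theorem exists_descent (hw : IsSignedPerm n w) (hne : w ≠ 1) :
    (∃ i, 1 ≤ i ∧ i ≤ (n : ℤ) ∧ w i ≤ -i) ∨
      ∃ a b, 1 ≤ a ∧ a < b ∧ b ≤ (n : ℤ) ∧ b ≤ w a ∧ w b ≤ a := by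
  obtain ⟨b, ⟨hb, hbn, hwb⟩, hmin⟩ := Int.exists_least_of_bdd
    (P := fun b => 1 ≤ b ∧ b ≤ (n : ℤ) ∧ w b < b) ⟨1, fun _ h => h.1⟩ (by
      by_contra! h
      exact hne (hw.eq_one_of_forall_apply_eq fun i hi hin =>
        hw.apply_eq_of_forall_le (fun j hj hjn => h j hj hjn) hi hin))
  by_cases hneg : w b ≤ -b
  · exact Or.inl ⟨b, hb, hbn, hneg⟩
  refine Or.inr ?_
  by_contra! hnone
  -- `J = [max (w b) 1, b - 1]` would be `w`-stable, yet contain `|w b|`, the image of `±b ∉ J`.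
  set J := Icc (max (w b) 1) (b - 1)
  have hJ : ∀ a ∈ J, w a ∈ J := fun a ha => by
    rw [mem_Icc] at ha ⊢
    have := hmin a
    have := hnone a b (by omega) (by omega) hbn
    omega
  have hwb0 : w b ≠ 0 := fun h0 => by
    have := w.injective (h0.trans hw.apply_zero.symm)
    omega
  rcases lt_or_gt_of_ne hwb0 with hlt | hgt
  · have := mem_Icc.mp (Perm.mem_of_apply_mem_of_mapsTo hJ (x := -b) (by
      rw [hw.1, mem_Icc]; omega))
    omega
  · have := mem_Icc.mp (Perm.mem_of_apply_mem_of_mapsTo hJ (x := b) (by rw [mem_Icc]; omega))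
    omega

theorem exists_isBTransp_tvdB_mul_add (hw : IsSignedPerm n w) (hne : w ≠ 1) :
    ∃ t c, IsBTransp n t c ∧ tvdB n (w * t) + 2 * c = tvdB n w := by
  rcases hw.exists_descent hne with ⟨i, hi, hin, hwi⟩ | ⟨a, b, ha, hab, hbn, hwa, hwb⟩
  · exact ⟨_, _, Or.inr ⟨i, by omega, by rw [abs_le]; omega, rfl, rfl⟩,
      tvdB_mul_swap_neg_add hw hi hin hwi⟩
  · exact ⟨_, _, Or.inl ⟨a, b, by omega, by omega, by rw [abs_le]; omega, by rw [abs_le]; omega,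
      by omega, by omega, rfl, rfl⟩, tvdB_mul_swap_mul_swap_neg_add ha hab hbn hwa hwb⟩

theorem exists_factorization (hw : IsSignedPerm n w) :
    ∃ L : List (Perm ℤ × ℕ), (∀ p ∈ L, IsBTransp n p.1 p.2) ∧
      (L.map Prod.fst).prod = w ∧ 2 * (L.map Prod.snd).sum = tvdB n w := by
  induction hN : tvdB n w using Nat.strong_induction_on generalizing w with
  | _ N ih =>
    by_cases hw1 : w = 1
    · subst hw1
      exact ⟨[], by simp, rfl, by simp [← hN, tvdB]⟩
    obtain ⟨t, c, ht, hwt⟩ := hw.exists_isBTransp_tvdB_mul_add hw1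
    obtain ⟨L, hL, hprod, hsum⟩ :=
      ih _ (by have := ht.cost_pos; omega) (hw.mul ht.isSignedPerm) rfl
    refine ⟨L ++ [(t, c)], fun p hp => ?_, ?_, ?_⟩
    · rcases List.mem_append.mp hp with hp | hp
      · exact hL p hp
      · rw [List.mem_singleton.mp hp]; exact ht
    · rw [List.map_append, List.prod_append, hprod, List.map_singleton, List.prod_singleton,
        mul_assoc, ht.mul_self, mul_one]
    · rw [List.map_append, List.sum_append, List.map_singleton, List.sum_singleton]
      omega

end IsSignedPerm

/-- For every signed permutation `w ∈ S^B_n`, the cost of `w` equals half of its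
total displacement: `$(w) = tvd(w)/2`. -/
theorem cost_eq_half_tvd_typeB (n : ℕ) (w : Equiv.Perm ℤ) (hw : IsSignedPerm n w) :
    2 * costB n w = tvdB n w := by
  obtain ⟨L, hL, hprod, hsum⟩ := hw.exists_factorization
  have hmem : (L.map Prod.snd).sum ∈ {c : ℕ | ∃ L : List (Equiv.Perm ℤ × ℕ),
      (∀ p ∈ L, IsBTransp n p.1 p.2) ∧ (L.map Prod.fst).prod = w ∧
        c = (L.map Prod.snd).sum} := ⟨L, hL, hprod, rfl⟩
  have hle : costB n w ≤ (L.map Prod.snd).sum := Nat.sInf_le hmem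
  obtain ⟨L₀, hL₀, hprod₀, hcost⟩ := Nat.sInf_mem ⟨_, hmem⟩
  change costB n w = _ at hcost
  have hge := fullDisp_prod_le L₀ hL₀
  rw [hprod₀, fullDisp_eq_two_mul_tvdB hw.1, ← hcost] at hge
  omega
end

section
/- For every affine signed permutation w in the group S̃^C_n, the cost of w equals half of its total displacement: $(w) = tvd(w)/2. -/
/-!
Write `N = 2n + 2` and let `D σ = ∑_{0 ≤ i < N} |σ i - i|` be the displacement of `σ` over one
period. For `w ∈ S̃^C_n` the substitution `i ↦ N - i` pairs the terms of `D w` and `w` fixes `0`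
and `n + 1`, so `D w = 2 tvd(w)`. Reindexing by the bijection that an `N`-periodic permutation
induces on residues makes `D` subadditive, and a transposition of cost `c` moves at most four
residue classes (two for the second kind) by at most `y - x`, so `D t ≤ 4c`; hence
`tvd(w) ≤ 2 $(w)`.

Conversely, for `w ≠ 1` let `p` maximise `w p - p` and put `b = w p`. Since `w⁻¹` cannot map
`(-b, b)` into itself, some `q ≥ b` has `a = w q < b`, and maximality gives `p ≤ a`. Multiplying
by `⟨(a b)⟩` exchanges the values `a` and `b` on the classes of `±p`, `±q`, which lowers `D` by
exactly `4 $(⟨(a b)⟩)`; induction on `D w` yields a factorization of cost `tvd(w) / 2`.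
-/

/-- An affine signed permutation in `S̃^C_n`: a bijection `w : ℤ → ℤ` with
`w(−i) = −w(i)` and `w(i + (2n+2)) = w(i) + (2n+2)` for all `i ∈ ℤ`. -/
def IsAffCPerm (n : ℕ) (w : Equiv.Perm ℤ) : Prop :=
  (∀ i : ℤ, w (-i) = - w i) ∧
  (∀ i : ℤ, w (i + (2 * (n : ℤ) + 2)) = w i + (2 * (n : ℤ) + 2))

/-- Total displacement: `tvd(w) = ∑_{i=1}^n |w(i) − i|`. -/
noncomputable def tvdAffC (n : ℕ) (w : Equiv.Perm ℤ) : ℕ :=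
  ∑ i ∈ Finset.Icc (1 : ℤ) (n : ℤ), (w i - i).natAbs

/-- `t` is a transposition `⟨(x y)⟩` of `S̃^C_n` of cost `c`.  Writing `N = 2n+2`:
either (first kind) `x < y` with `x ≢ ±y (mod N)`, `t` exchanges `x + kN ↔ y + kN` and
`−x + kN ↔ −y + kN` for all `k ∈ ℤ` and fixes all other integers, and `c = y − x`;
or (second kind) `x < y` with `x + y ≡ 0 (mod N)`, `x ≢ y (mod N)`, and `x` not a
multiple of `n+1`, `t` exchanges `x + kN ↔ y + kN` for all `k ∈ ℤ` and fixes all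
other integers, and `c = (y − x)/2`. -/
def IsAffCTransp (n : ℕ) (t : Equiv.Perm ℤ) (c : ℕ) : Prop :=
  (∃ x y : ℤ, x < y ∧
    ¬ ((2 * (n : ℤ) + 2) ∣ (y - x)) ∧ ¬ ((2 * (n : ℤ) + 2) ∣ (y + x)) ∧
    (∀ k : ℤ, t (x + k * (2 * (n : ℤ) + 2)) = y + k * (2 * (n : ℤ) + 2)) ∧
    (∀ k : ℤ, t (y + k * (2 * (n : ℤ) + 2)) = x + k * (2 * (n : ℤ) + 2)) ∧
    (∀ k : ℤ, t (-x + k * (2 * (n : ℤ) + 2)) = -y + k * (2 * (n : ℤ) + 2)) ∧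
    (∀ k : ℤ, t (-y + k * (2 * (n : ℤ) + 2)) = -x + k * (2 * (n : ℤ) + 2)) ∧
    (∀ z : ℤ, (∀ k : ℤ, z ≠ x + k * (2 * (n : ℤ) + 2) ∧ z ≠ y + k * (2 * (n : ℤ) + 2) ∧
        z ≠ -x + k * (2 * (n : ℤ) + 2) ∧ z ≠ -y + k * (2 * (n : ℤ) + 2)) → t z = z) ∧
    (c : ℤ) = y - x) ∨
  (∃ x y : ℤ, x < y ∧
    ((2 * (n : ℤ) + 2) ∣ (x + y)) ∧ ¬ ((2 * (n : ℤ) + 2) ∣ (y - x)) ∧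
    ¬ (((n : ℤ) + 1) ∣ x) ∧
    (∀ k : ℤ, t (x + k * (2 * (n : ℤ) + 2)) = y + k * (2 * (n : ℤ) + 2)) ∧
    (∀ k : ℤ, t (y + k * (2 * (n : ℤ) + 2)) = x + k * (2 * (n : ℤ) + 2)) ∧
    (∀ z : ℤ, (∀ k : ℤ, z ≠ x + k * (2 * (n : ℤ) + 2) ∧ z ≠ y + k * (2 * (n : ℤ) + 2)) →
        t z = z) ∧
    2 * (c : ℤ) = y - x)

/-- The cost of `w ∈ S̃^C_n`: the minimum of `$(t₁) + ⋯ + $(t_k)` over all factorizations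
`w = t₁ ⋯ t_k` into transpositions of `S̃^C_n`. -/
noncomputable def costAffC (n : ℕ) (w : Equiv.Perm ℤ) : ℕ :=
  sInf {c : ℕ | ∃ L : List (Equiv.Perm ℤ × ℕ),
    (∀ p ∈ L, IsAffCTransp n p.1 p.2) ∧
    (L.map Prod.fst).prod = w ∧ c = (L.map Prod.snd).sum}

open Finset Equiv

def affinePerm (N : ℤ) : Subgroup (Perm ℤ) where
  carrier := {σ | ∀ z, σ (z + N) = σ z + N}
  one_mem' _ := rfl
  mul_mem' {σ τ} hσ hτ z := by
    simp only [Set.mem_ofPred_eq, Perm.mul_apply] at *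
    rw [hτ, hσ]
  inv_mem' {σ} hσ z := by
    simp only [Set.mem_ofPred_eq] at *
    apply σ.injective
    simp only [hσ, Perm.coe_inv, apply_symm_apply]

noncomputable def periodDisp (N : ℤ) (σ : Perm ℤ) : ℤ := ∑ i ∈ Ico 0 N, |σ i - i|

lemma periodDisp_nonneg (N : ℤ) (σ : Perm ℤ) : 0 ≤ periodDisp N σ :=
  sum_nonneg fun _ _ => abs_nonneg _

lemma sum_Ico_eq_sum_image_emod {N : ℤ} (hN : 0 < N) (R : Finset ℤ) {g : ℤ → ℤ}
    (hg : ∀ j, g j ≠ 0 → ∃ r ∈ R, j ≡ r [ZMOD N]) :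
    ∑ j ∈ Ico 0 N, g j = ∑ j ∈ R.image (· % N), g j := by
  refine (sum_subset (fun j hj => ?_) fun j hj hjR => ?_).symm
  · obtain ⟨r, -, rfl⟩ := mem_image.mp hj
    exact mem_Ico.mpr ⟨Int.emod_nonneg r hN.ne', Int.emod_lt_of_pos r hN⟩
  · by_contra h
    obtain ⟨r, hr, hjr⟩ := hg j h
    rw [mem_Ico] at hj
    exact hjR (mem_image.mpr ⟨r, hr, hjr.symm.eq.trans (Int.emod_eq_of_lt hj.1 hj.2)⟩)

namespace affinePerm

variable {N : ℤ} {σ τ : Perm ℤ}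

lemma apply_add_mul (hσ : σ ∈ affinePerm N) (z k : ℤ) : σ (z + k * N) = σ z + k * N := by
  have hper : Function.Periodic (fun z => σ z - z) N := fun z => by simp [hσ z]
  have := hper.int_mul k z
  simp only [Int.cast_id] at this
  linarith

lemma sub_eq_of_modEq (hσ : σ ∈ affinePerm N) {z z' : ℤ} (h : z ≡ z' [ZMOD N]) :
    σ z' - z' = σ z - z := by
  obtain ⟨k, rfl⟩ := Int.modEq_iff_add_fac.mp h
  rw [mul_comm, apply_add_mul hσ]
  ring

lemma inv_apply_emod_emod (hσ : σ ∈ affinePerm N) {i : ℤ} (hi : i ∈ Ico 0 N) :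
    σ⁻¹ (σ i % N) % N = i := by
  rw [mem_Ico] at hi
  rw [Int.emod_def (σ i), sub_eq_add_neg, neg_mul_eq_mul_neg, mul_comm, ← apply_add_mul hσ,
    Perm.coe_inv, symm_apply_apply, Int.add_mul_emod_self_right, Int.emod_eq_of_lt hi.1 hi.2]

lemma sum_Ico_comp (hN : 0 < N) (hσ : σ ∈ affinePerm N) {f : ℤ → ℤ}
    (hf : Function.Periodic f N) : ∑ i ∈ Ico 0 N, f (σ i) = ∑ i ∈ Ico 0 N, f i := by
  have hmem : ∀ z : ℤ, z % N ∈ Ico 0 N := fun z =>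
    mem_Ico.mpr ⟨Int.emod_nonneg z hN.ne', Int.emod_lt_of_pos z hN⟩
  refine sum_nbij' (fun i => σ i % N) (fun j => σ⁻¹ j % N) (fun i _ => hmem _) (fun j _ => hmem _)
    (fun i hi => inv_apply_emod_emod hσ hi)
    (fun j hj => by simpa using inv_apply_emod_emod (inv_mem hσ) hj) (fun i _ => ?_)
  rw [Int.emod_def, sub_eq_add_neg, neg_mul_eq_mul_neg, mul_comm]
  exact (hf.int_mul _ _).symm

lemma periodDisp_mul_le (hN : 0 < N) (hσ : σ ∈ affinePerm N) (hτ : τ ∈ affinePerm N) :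
    periodDisp N (σ * τ) ≤ periodDisp N σ + periodDisp N τ := by
  have hf : Function.Periodic (fun j => |σ j - j|) N := fun j => by simp [hσ j]
  calc periodDisp N (σ * τ) ≤ ∑ i ∈ Ico 0 N, (|σ (τ i) - τ i| + |τ i - i|) :=
        sum_le_sum fun i _ => abs_sub_le _ _ _
    _ = periodDisp N σ + periodDisp N τ := by
        rw [sum_add_distrib, sum_Ico_comp hN hτ hf]
        rfl

lemma periodDisp_mul (hN : 0 < N) (hσ : σ ∈ affinePerm N) (hτ : τ ∈ affinePerm N) :
    periodDisp N (σ * τ) = ∑ j ∈ Ico 0 N, |σ j - τ⁻¹ j| := by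
  have hf : Function.Periodic (fun j => |σ j - τ⁻¹ j|) N := fun j => by
    simp [hσ j, inv_mem hτ j]
  rw [periodDisp, ← sum_Ico_comp hN hτ hf]
  simp

lemma exists_forall_sub_le (hN : 0 < N) (hσ : σ ∈ affinePerm N) :
    ∃ p ∈ Ico 0 N, ∀ j, σ j - j ≤ σ p - p := by
  obtain ⟨p, hp, hmax⟩ := exists_max_image (Ico 0 N) (fun j => σ j - j) ⟨0, by simp [hN]⟩
  refine ⟨p, hp, fun j => ?_⟩
  rw [sub_eq_of_modEq hσ (Int.mod_modEq j N)]
  exact hmax _ (mem_Ico.mpr ⟨Int.emod_nonneg j hN.ne', Int.emod_lt_of_pos j hN⟩)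

end affinePerm

def ShiftsClasses (N : ℤ) (σ : Perm ℤ) (S : List (ℤ × ℤ)) : Prop :=
  (∀ p ∈ S, ∀ k, σ (p.1 + k * N) = p.2 + k * N) ∧
    ∀ z, (∀ p ∈ S, ∀ k, z ≠ p.1 + k * N) → σ z = z

namespace ShiftsClasses

variable {N C : ℤ} {σ : Perm ℤ} {S : List (ℤ × ℤ)}

lemma eq_or_exists (hσ : ShiftsClasses N σ S) (z : ℤ) :
    σ z = z ∨ ∃ p ∈ S, z ≡ p.1 [ZMOD N] ∧ σ z - z = p.2 - p.1 := by
  by_cases h : ∃ p ∈ S, ∃ k, z = p.1 + k * N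
  · obtain ⟨p, hp, k, rfl⟩ := h
    exact Or.inr ⟨p, hp, Int.add_mul_modulus_modEq_iff.mpr rfl, by rw [hσ.1 p hp]; ring⟩
  · push Not at h
    exact Or.inl (hσ.2 z h)

lemma mem_affinePerm (hσ : ShiftsClasses N σ S) : σ ∈ affinePerm N := by
  intro z
  by_cases h : ∃ p ∈ S, ∃ k, z = p.1 + k * N
  · obtain ⟨p, hp, k, rfl⟩ := h
    rw [show p.1 + k * N + N = p.1 + (k + 1) * N by ring, hσ.1 p hp, hσ.1 p hp]
    ring
  · push Not at h
    rw [hσ.2 z h, hσ.2 (z + N) fun p hp k hk => h p hp (k - 1) (by linarith)]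

lemma periodDisp_le (hσ : ShiftsClasses N σ S) (hN : 0 < N) (hC : ∀ p ∈ S, |p.2 - p.1| ≤ C)
    (hC0 : 0 ≤ C) : periodDisp N σ ≤ S.length * C := by
  have hsupp : ∀ z, |σ z - z| ≠ 0 → ∃ r ∈ (S.map Prod.fst).toFinset, z ≡ r [ZMOD N] := by
    intro z hz
    rcases hσ.eq_or_exists z with h | ⟨p, hp, hzp, -⟩
    · simp [h] at hz
    · exact ⟨p.1, List.mem_toFinset.mpr (List.mem_map_of_mem hp), hzp⟩
  rw [periodDisp, sum_Ico_eq_sum_image_emod hN _ hsupp]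
  refine (sum_le_card_nsmul _ _ C fun z _ => ?_).trans ?_
  · rcases hσ.eq_or_exists z with h | ⟨p, hp, -, h⟩
    · simpa [h] using hC0
    · simpa [h] using hC p hp
  · rw [nsmul_eq_mul]
    refine mul_le_mul_of_nonneg_right ?_ hC0
    exact_mod_cast card_image_le.trans ((List.toFinset_card_le _).trans (by simp))

end ShiftsClasses

namespace IsAffCTransp

variable {n : ℕ} {t : Perm ℤ} {c : ℕ}

lemma exists_shiftsClasses (ht : IsAffCTransp n t c) : ∃ (S : List (ℤ × ℤ)) (C : ℤ),
    ShiftsClasses (2 * n + 2) t S ∧ (∀ p ∈ S, |p.2 - p.1| ≤ C) ∧ 0 ≤ C ∧ S.length * C = 4 * c := by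
  rcases ht with ⟨x, y, hxy, -, -, h1, h2, h3, h4, hfix, hc⟩ |
    ⟨x, y, hxy, -, -, -, h1, h2, hfix, hc⟩
  · refine ⟨[(x, y), (y, x), (-x, -y), (-y, -x)], y - x,
      ⟨by simp [h1, h2, h3, h4], fun z hz => hfix z fun k => ?_⟩, fun p hp => ?_, by linarith,
      by simp only [List.length_cons, List.length_nil]; push_cast; linarith⟩
    · simp only [List.mem_cons, List.not_mem_nil, forall_eq_or_imp] at hz
      exact ⟨hz.1 k, hz.2.1 k, hz.2.2.1 k, hz.2.2.2.1 k⟩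
    · simp only [List.mem_cons, List.not_mem_nil, or_false] at hp
      rcases hp with rfl | rfl | rfl | rfl <;> exact abs_le.mpr ⟨by linarith, by linarith⟩
  · refine ⟨[(x, y), (y, x)], y - x, ⟨by simp [h1, h2], fun z hz => hfix z fun k => ?_⟩,
      fun p hp => ?_, by linarith,
      by simp only [List.length_cons, List.length_nil]; push_cast; linarith⟩
    · simp only [List.mem_cons, List.not_mem_nil, forall_eq_or_imp] at hz
      exact ⟨hz.1 k, hz.2.1 k⟩
    · simp only [List.mem_cons, List.not_mem_nil, or_false] at hp
      rcases hp with rfl | rfl <;> exact abs_le.mpr ⟨by linarith, by linarith⟩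

lemma mem_affinePerm (ht : IsAffCTransp n t c) : t ∈ affinePerm (2 * n + 2) := by
  obtain ⟨S, C, hS, -⟩ := ht.exists_shiftsClasses
  exact hS.mem_affinePerm

lemma periodDisp_le (ht : IsAffCTransp n t c) : periodDisp (2 * n + 2) t ≤ 4 * c := by
  obtain ⟨S, C, hS, hC, hC0, hSC⟩ := ht.exists_shiftsClasses
  exact hSC ▸ hS.periodDisp_le (by positivity) hC hC0

end IsAffCTransp

lemma periodDisp_list_prod_le {n : ℕ} (L : List (Perm ℤ × ℕ))
    (hL : ∀ p ∈ L, IsAffCTransp n p.1 p.2) :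
    periodDisp (2 * n + 2) (L.map Prod.fst).prod ≤ 4 * (L.map Prod.snd).sum := by
  induction L with
  | nil => simp [periodDisp]
  | cons p L ih =>
    have hp := hL p List.mem_cons_self
    have hL' : ∀ q ∈ L, IsAffCTransp n q.1 q.2 := fun q hq => hL q (List.mem_cons_of_mem p hq)
    have hprod : (L.map Prod.fst).prod ∈ affinePerm (2 * n + 2) :=
      Subgroup.list_prod_mem _ fun σ hσ => by
        obtain ⟨q, hq, rfl⟩ := List.mem_map.mp hσ
        exact (hL' q hq).mem_affinePerm
    simp only [List.map_cons, List.prod_cons, List.sum_cons, Nat.cast_add]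
    linarith [affinePerm.periodDisp_mul_le (by positivity) hp.mem_affinePerm hprod,
      hp.periodDisp_le, ih hL']

namespace IsAffCPerm

variable {n : ℕ} {v w : Perm ℤ}

lemma mem_affinePerm (hw : IsAffCPerm n w) : w ∈ affinePerm (2 * n + 2) := hw.2

lemma mul (hv : IsAffCPerm n v) (hw : IsAffCPerm n w) : IsAffCPerm n (v * w) :=
  ⟨fun i => by simp [hv.1, hw.1], mul_mem hv.mem_affinePerm hw.mem_affinePerm⟩

lemma periodDisp_eq (hw : IsAffCPerm n w) : periodDisp (2 * n + 2) w = 2 * tvdAffC n w := by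
  have h0 : w 0 = 0 := by
    have := hw.1 0
    rw [neg_zero] at this
    linarith
  have h1 : w (n + 1) = n + 1 := by
    have := hw.2 (-(n + 1))
    rw [hw.1, show -((n : ℤ) + 1) + (2 * n + 2) = n + 1 by ring] at this
    linarith
  have hsplit : Ico (0 : ℤ) (2 * n + 2) =
      insert 0 (insert ((n : ℤ) + 1) (Icc 1 (n : ℤ) ∪ Icc (n + 2) (2 * n + 1))) := by
    ext i
    simp only [mem_Ico, mem_insert, mem_union, mem_Icc]
    omega
  have hrefl :
      ∑ i ∈ Icc ((n : ℤ) + 2) (2 * n + 1), |w i - i| = ∑ i ∈ Icc 1 (n : ℤ), |w i - i| := by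
    refine sum_nbij' (fun i => 2 * n + 2 - i) (fun i => 2 * n + 2 - i)
      (by simp only [mem_Icc]; omega) (by simp only [mem_Icc]; omega) (by simp) (by simp)
      fun i _ => ?_
    rw [show 2 * n + 2 - i = -i + (2 * n + 2) by ring, hw.2, hw.1, ← abs_neg]
    ring_nf
  rw [periodDisp, hsplit, sum_insert (by simp only [mem_insert, mem_union, mem_Icc]; omega),
    sum_insert (by simp), sum_union (disjoint_left.mpr fun i => by simp only [mem_Icc]; omega),
    hrefl, h0, h1, sub_self, sub_self, abs_zero, tvdAffC]
  push_cast
  ring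

lemma eq_of_apply_modEq_neg (hw : IsAffCPerm n w) {z : ℤ}
    (h : w z ≡ -w z [ZMOD 2 * n + 2]) : w z = z := by
  have := affinePerm.sub_eq_of_modEq (inv_mem hw.mem_affinePerm) h
  rw [← hw.1] at this
  simp only [Perm.coe_inv, symm_apply_apply] at this
  linarith [hw.1 z]

lemma exists_le_apply_lt (hw : IsAffCPerm n w) {p : ℤ} (hp : -w p < p) (hpb : p < w p) :
    ∃ q, w p ≤ q ∧ w q < w p := by
  by_contra! h
  have hmaps : ∀ z ∈ Ioo (-w p) (w p), w⁻¹ z ∈ Ioo (-w p) (w p) := by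
    intro z hz
    rw [mem_Ioo] at hz ⊢
    constructor
    · by_contra! hle
      have := h (-w⁻¹ z) (by linarith)
      rw [hw.1, Perm.coe_inv, apply_symm_apply] at this
      linarith
    · by_contra! hle
      have := h _ hle
      rw [Perm.coe_inv, apply_symm_apply] at this
      linarith
  have himage : (Ioo (-w p) (w p)).image ⇑w⁻¹ = Ioo (-w p) (w p) :=
    eq_of_subset_of_card_le (image_subset_iff.mpr hmaps)
      (card_image_of_injective _ (w⁻¹).injective).ge
  obtain ⟨z, hz, hzp⟩ := mem_image.mp (himage ▸ mem_Ioo.mpr ⟨hp, hpb⟩ : p ∈ _)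
  rw [← hzp, Perm.coe_inv, apply_symm_apply, mem_Ioo] at hz
  exact lt_irrefl _ hz.2

end IsAffCPerm

/-- When `a ≡ -b [ZMOD N]` the last two branches are never reached, and this is the
transposition `⟨(a b)⟩` of the second kind; otherwise it is the one of the first kind. -/
def signedSwapFun (N a b z : ℤ) : ℤ :=
  if z ≡ a [ZMOD N] then z + (b - a)
  else if z ≡ b [ZMOD N] then z - (b - a)
  else if z ≡ -a [ZMOD N] then z - (b - a)
  else if z ≡ -b [ZMOD N] then z + (b - a)
  else z

namespace signedSwapFun

variable {N a b z : ℤ}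

lemma apply_of_modEq (h : z ≡ a [ZMOD N]) : signedSwapFun N a b z = z + (b - a) := if_pos h

lemma apply_of_modEq_right (hab : ¬ a ≡ b [ZMOD N]) (h : z ≡ b [ZMOD N]) :
    signedSwapFun N a b z = z - (b - a) := by
  rw [signedSwapFun, if_neg fun h' => hab (h'.symm.trans h), if_pos h]

lemma apply_of_modEq_neg (ha : ¬ a ≡ -a [ZMOD N]) (h : z ≡ -a [ZMOD N]) :
    signedSwapFun N a b z = z - (b - a) := by
  rw [signedSwapFun, if_neg fun h' => ha (h'.symm.trans h)]
  split_ifs <;> rfl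

lemma apply_of_modEq_neg_right (hab : ¬ a ≡ b [ZMOD N]) (hb : ¬ b ≡ -b [ZMOD N])
    (h : z ≡ -b [ZMOD N]) : signedSwapFun N a b z = z + (b - a) := by
  unfold signedSwapFun
  split_ifs with h1 h2 h3
  · rfl
  · exact absurd (h2.symm.trans h) hb
  · exact absurd (Int.neg_modEq_neg.mp (h3.symm.trans h)) hab
  · rfl

lemma apply_of_not_modEq (h1 : ¬ z ≡ a [ZMOD N]) (h2 : ¬ z ≡ b [ZMOD N])
    (h3 : ¬ z ≡ -a [ZMOD N]) (h4 : ¬ z ≡ -b [ZMOD N]) : signedSwapFun N a b z = z := by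
  simp [signedSwapFun, h1, h2, h3, h4]

lemma involutive (hab : ¬ a ≡ b [ZMOD N]) (ha : ¬ a ≡ -a [ZMOD N]) (hb : ¬ b ≡ -b [ZMOD N]) :
    Function.Involutive (signedSwapFun N a b) := by
  intro z
  by_cases h1 : z ≡ a [ZMOD N]
  · rw [apply_of_modEq h1, apply_of_modEq_right hab (by simpa using h1.add_right (b - a))]
    ring
  by_cases h2 : z ≡ b [ZMOD N]
  · rw [apply_of_modEq_right hab h2, apply_of_modEq (by simpa using h2.sub_right (b - a))]
    ring
  by_cases h3 : z ≡ -a [ZMOD N]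
  · rw [apply_of_modEq_neg ha h3,
      apply_of_modEq_neg_right hab hb (by convert h3.sub_right (b - a) using 2; ring)]
    ring
  by_cases h4 : z ≡ -b [ZMOD N]
  · rw [apply_of_modEq_neg_right hab hb h4,
      apply_of_modEq_neg ha (by convert h4.add_right (b - a) using 2; ring)]
    ring
  rw [apply_of_not_modEq h1 h2 h3 h4, apply_of_not_modEq h1 h2 h3 h4]

lemma add_modulus : signedSwapFun N a b (z + N) = signedSwapFun N a b z + N := by
  simp only [signedSwapFun, Int.add_modulus_modEq_iff]
  split_ifs <;> ring

lemma neg (hab : ¬ a ≡ b [ZMOD N]) (ha : ¬ a ≡ -a [ZMOD N]) (hb : ¬ b ≡ -b [ZMOD N]) :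
    signedSwapFun N a b (-z) = -signedSwapFun N a b z := by
  by_cases h1 : z ≡ a [ZMOD N]
  · rw [apply_of_modEq h1, apply_of_modEq_neg ha h1.neg]
    ring
  by_cases h2 : z ≡ b [ZMOD N]
  · rw [apply_of_modEq_right hab h2, apply_of_modEq_neg_right hab hb h2.neg]
    ring
  by_cases h3 : z ≡ -a [ZMOD N]
  · rw [apply_of_modEq_neg ha h3, apply_of_modEq (by simpa using h3.neg)]
    ring
  by_cases h4 : z ≡ -b [ZMOD N]
  · rw [apply_of_modEq_neg_right hab hb h4, apply_of_modEq_right hab (by simpa using h4.neg)]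
    ring
  rw [apply_of_not_modEq h1 h2 h3 h4, apply_of_not_modEq (z := -z)]
  all_goals intro h; simp_all [← Int.neg_modEq_neg (a := -z)]

end signedSwapFun

lemma card_image_emod_of_not_modEq_neg {N a b : ℤ} (hab : ¬ a ≡ b [ZMOD N])
    (ha : ¬ a ≡ -a [ZMOD N]) (hb : ¬ b ≡ -b [ZMOD N]) (hk : ¬ a ≡ -b [ZMOD N]) :
    (({a, b, -a, -b} : Finset ℤ).image (· % N)).card = 4 := by
  have hba : ¬ b ≡ -a [ZMOD N] := fun h => hk (by simpa using h.neg.symm)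
  have hnn : ¬ -a ≡ -b [ZMOD N] := fun h => hab (Int.neg_modEq_neg.mp h)
  simp only [image_insert, image_singleton]
  rw [card_insert_of_notMem, card_insert_of_notMem, card_pair hnn]
  · simpa [not_or] using ⟨hba, hb⟩
  · simpa [not_or] using ⟨hab, ha, hk⟩

lemma card_image_emod_of_modEq_neg {N a b : ℤ} (hab : ¬ a ≡ b [ZMOD N])
    (hk : a ≡ -b [ZMOD N]) : (({a, b, -a, -b} : Finset ℤ).image (· % N)).card = 2 := by
  have h1 : (-a) % N = b % N := by simpa using (Int.ModEq.neg hk).eq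
  have h2 : (-b) % N = a % N := hk.symm
  simp only [image_insert, image_singleton, h1, h2]
  rw [insert_comm, pair_comm, insert_eq_of_mem (by simp), insert_eq_of_mem (by simp),
    card_pair hab]

def signedSwap (N a b : ℤ) (hab : ¬ a ≡ b [ZMOD N]) (ha : ¬ a ≡ -a [ZMOD N])
    (hb : ¬ b ≡ -b [ZMOD N]) : Perm ℤ :=
  Function.Involutive.toPerm _ (signedSwapFun.involutive hab ha hb)

section

variable {N a b : ℤ} {hab : ¬ a ≡ b [ZMOD N]} {ha : ¬ a ≡ -a [ZMOD N]}
  {hb : ¬ b ≡ -b [ZMOD N]}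

lemma signedSwap_apply {z : ℤ} : signedSwap N a b hab ha hb z = signedSwapFun N a b z := rfl

lemma signedSwap_mul_self : signedSwap N a b hab ha hb * signedSwap N a b hab ha hb = 1 :=
  Equiv.ext (signedSwapFun.involutive hab ha hb)

end

namespace signedSwap

variable {n : ℕ} {a b : ℤ} {hab : ¬ a ≡ b [ZMOD 2 * n + 2]} {ha : ¬ a ≡ -a [ZMOD 2 * n + 2]}
  {hb : ¬ b ≡ -b [ZMOD 2 * n + 2]}

lemma isAffCPerm : IsAffCPerm n (signedSwap (2 * n + 2) a b hab ha hb) :=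
  ⟨fun _ => signedSwapFun.neg hab ha hb, fun _ => signedSwapFun.add_modulus⟩

lemma exists_isAffCTransp (hlt : a < b) : ∃ c : ℕ,
    IsAffCTransp n (signedSwap (2 * n + 2) a b hab ha hb) c ∧
      4 * (c : ℤ) = (b - a) * (({a, b, -a, -b} : Finset ℤ).image (· % (2 * (n : ℤ) + 2))).card := by
  have hcls : ∀ r k : ℤ, r + k * (2 * n + 2) ≡ r [ZMOD 2 * n + 2] :=
    fun r k => Int.add_mul_modulus_modEq_iff.mpr rfl
  have hout : ∀ z r : ℤ, (∀ k, z ≠ r + k * (2 * n + 2)) → ¬ z ≡ r [ZMOD 2 * n + 2] :=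
    fun z r h hz => by
      obtain ⟨k, hk⟩ := Int.modEq_iff_add_fac.mp hz
      exact h (-k) (by linarith)
  have hdvd : ∀ {u v : ℤ}, ¬ u ≡ v [ZMOD 2 * n + 2] → ¬ (2 * (n : ℤ) + 2) ∣ v - u :=
    fun h h' => h (Int.modEq_iff_dvd.mpr h')
  by_cases hk : a ≡ -b [ZMOD 2 * n + 2]
  · obtain ⟨m, hm⟩ := Int.modEq_iff_dvd.mp hk
    refine ⟨(-a - (n + 1) * m).toNat, Or.inr ⟨a, b, hlt, ⟨-m, by linarith⟩, hdvd hab, ?_,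
      fun k => ?_, fun k => ?_, fun z hz => ?_, ?_⟩, ?_⟩
    · rintro ⟨l, hl⟩
      exact ha (Int.modEq_iff_dvd.mpr ⟨-l, by linarith⟩)
    · rw [signedSwap_apply, signedSwapFun.apply_of_modEq (hcls a k)]
      ring
    · rw [signedSwap_apply, signedSwapFun.apply_of_modEq_right hab (hcls b k)]
      ring
    · have h1 := hout z a fun k => (hz k).1
      have h2 := hout z b fun k => (hz k).2
      rw [signedSwap_apply, signedSwapFun.apply_of_not_modEq h1 h2
        (fun h => h2 (h.trans (by simpa using hk.neg))) (fun h => h1 (h.trans hk.symm))]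
    · rw [Int.toNat_of_nonneg (by linarith)]
      linarith
    · rw [card_image_emod_of_modEq_neg hab hk, Int.toNat_of_nonneg (by linarith)]
      push_cast
      linarith
  · have hsum : ¬ (2 * (n : ℤ) + 2) ∣ b + a := fun h =>
      hk (Int.modEq_iff_dvd.mpr (by rw [show -b - a = -(b + a) by ring]; exact h.neg_right))
    refine ⟨(b - a).toNat, Or.inl ⟨a, b, hlt, hdvd hab, hsum, fun k => ?_, fun k => ?_,
      fun k => ?_, fun k => ?_, fun z hz => ?_, ?_⟩, ?_⟩
    · rw [signedSwap_apply, signedSwapFun.apply_of_modEq (hcls a k)]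
      ring
    · rw [signedSwap_apply, signedSwapFun.apply_of_modEq_right hab (hcls b k)]
      ring
    · rw [signedSwap_apply, signedSwapFun.apply_of_modEq_neg ha (hcls (-a) k)]
      ring
    · rw [signedSwap_apply, signedSwapFun.apply_of_modEq_neg_right hab hb (hcls (-b) k)]
      ring
    · rw [signedSwap_apply, signedSwapFun.apply_of_not_modEq (hout z a fun k => (hz k).1)
        (hout z b fun k => (hz k).2.1) (hout z (-a) fun k => (hz k).2.2.1)
        (hout z (-b) fun k => (hz k).2.2.2)]
    · rw [Int.toNat_of_nonneg (by linarith)]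
    · rw [card_image_emod_of_not_modEq_neg hab ha hb hk, Int.toNat_of_nonneg (by linarith)]
      push_cast
      ring

end signedSwap

namespace IsAffCPerm

variable {n : ℕ} {w : Perm ℤ}

lemma periodDisp_signedSwap_mul (hw : IsAffCPerm n w) {p q a b : ℤ} (hpa : p ≤ a) (hlt : a < b)
    (hbq : b ≤ q) (hp : w p = b) (hq : w q = a) (hab : ¬ a ≡ b [ZMOD 2 * n + 2])
    (ha : ¬ a ≡ -a [ZMOD 2 * n + 2]) (hb : ¬ b ≡ -b [ZMOD 2 * n + 2]) :
    periodDisp (2 * n + 2) (signedSwap (2 * n + 2) a b hab ha hb * w) =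
      periodDisp (2 * n + 2) w -
        (b - a) * (({a, b, -a, -b} : Finset ℤ).image (· % (2 * (n : ℤ) + 2))).card := by
  have hN : (0 : ℤ) < 2 * n + 2 := by positivity
  set t := signedSwap (2 * n + 2) a b hab ha hb
  have hD : periodDisp (2 * n + 2) w = ∑ j ∈ Ico 0 (2 * (n : ℤ) + 2), |j - w⁻¹ j| := by
    simpa using affinePerm.periodDisp_mul hN (one_mem _) hw.mem_affinePerm
  have hwp : w⁻¹ b = p := by rw [← hp, Perm.coe_inv, symm_apply_apply]
  have hwq : w⁻¹ a = q := by rw [← hq, Perm.coe_inv, symm_apply_apply]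
  have hwp' : w⁻¹ (-b) = -p := by rw [← hp, ← hw.1, Perm.coe_inv, symm_apply_apply]
  have hwq' : w⁻¹ (-a) = -q := by rw [← hq, ← hw.1, Perm.coe_inv, symm_apply_apply]
  have hsupp : ∀ j, |t j - w⁻¹ j| - |j - w⁻¹ j| ≠ 0 →
      ∃ r ∈ ({a, b, -a, -b} : Finset ℤ), j ≡ r [ZMOD 2 * n + 2] := by
    intro j hj
    by_contra! h
    simp only [mem_insert, mem_singleton, forall_eq_or_imp, forall_eq] at h
    rw [signedSwap_apply, signedSwapFun.apply_of_not_modEq h.1 h.2.1 h.2.2.1 h.2.2.2] at hj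
    simp at hj
  have hval : ∀ j ∈ ({a, b, -a, -b} : Finset ℤ).image (· % (2 * (n : ℤ) + 2)),
      |t j - w⁻¹ j| - |j - w⁻¹ j| = a - b := by
    intro j hj
    obtain ⟨r, hr, rfl⟩ := mem_image.mp hj
    have hjr := Int.mod_modEq r (2 * n + 2)
    have hjw := affinePerm.sub_eq_of_modEq (inv_mem hw.mem_affinePerm) hjr.symm
    generalize r % (2 * n + 2) = j at hjr hjw ⊢
    simp only [mem_insert, mem_singleton] at hr
    rcases hr with h | h | h | h <;> subst r
    · rw [signedSwap_apply, signedSwapFun.apply_of_modEq hjr, abs_eq_max_neg, abs_eq_max_neg]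
      omega
    · rw [signedSwap_apply, signedSwapFun.apply_of_modEq_right hab hjr, abs_eq_max_neg,
        abs_eq_max_neg]
      omega
    · rw [signedSwap_apply, signedSwapFun.apply_of_modEq_neg ha hjr, abs_eq_max_neg,
        abs_eq_max_neg]
      omega
    · rw [signedSwap_apply, signedSwapFun.apply_of_modEq_neg_right hab hb hjr, abs_eq_max_neg,
        abs_eq_max_neg]
      omega
  have hdiff := sum_Ico_eq_sum_image_emod hN _ hsupp
  rw [sum_congr rfl hval, sum_const, nsmul_eq_mul, sum_sub_distrib] at hdiff
  rw [affinePerm.periodDisp_mul hN signedSwap.isAffCPerm.mem_affinePerm hw.mem_affinePerm, hD]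
  linarith

lemma exists_transp_mul (hw : IsAffCPerm n w) (hne : w ≠ 1) :
    ∃ t c, IsAffCTransp n t c ∧ IsAffCPerm n t ∧ t * t = 1 ∧ 0 < c ∧
      periodDisp (2 * n + 2) (t * w) + 4 * c = periodDisp (2 * n + 2) w := by
  obtain ⟨p, hp, hmax⟩ := affinePerm.exists_forall_sub_le (by positivity) hw.mem_affinePerm
  have hmin : ∀ j, -(w p - p) ≤ w j - j := fun j => by linarith [hmax (-j), hw.1 j]
  have hpos : 0 < w p - p := by
    obtain ⟨j, hj⟩ : ∃ j, w j ≠ j := by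
      by_contra! h
      exact hne (Equiv.ext h)
    have := hmax j
    have := hmin j
    omega
  rw [mem_Ico] at hp
  obtain ⟨q, hbq, hqb⟩ := hw.exists_le_apply_lt (p := p) (by omega) (by omega)
  have hpa : p ≤ w q := by linarith [hmin q]
  have hab : ¬ w q ≡ w p [ZMOD 2 * n + 2] := fun h => by
    have := affinePerm.sub_eq_of_modEq (inv_mem hw.mem_affinePerm) h
    simp only [Perm.coe_inv, symm_apply_apply] at this
    omega
  have ha : ¬ w q ≡ -w q [ZMOD 2 * n + 2] := fun h => by
    have := hw.eq_of_apply_modEq_neg h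
    omega
  have hb : ¬ w p ≡ -w p [ZMOD 2 * n + 2] := fun h => by
    have := hw.eq_of_apply_modEq_neg h
    omega
  obtain ⟨c, hc, hcard⟩ := signedSwap.exists_isAffCTransp (hab := hab) (ha := ha) (hb := hb) hqb
  have hcard_pos : (0 : ℤ) < (({w q, w p, -w q, -w p} : Finset ℤ).image
      (· % (2 * (n : ℤ) + 2))).card := by
    exact_mod_cast ((insert_nonempty _ _).image _).card_pos
  refine ⟨_, c, hc, signedSwap.isAffCPerm, signedSwap_mul_self, ?_, ?_⟩
  · have := mul_pos (sub_pos.mpr hqb) hcard_pos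
    omega
  · rw [hw.periodDisp_signedSwap_mul hpa hqb hbq rfl rfl]
    linarith

lemma exists_factorization (hw : IsAffCPerm n w) :
    ∃ L : List (Perm ℤ × ℕ), (∀ p ∈ L, IsAffCTransp n p.1 p.2) ∧ (L.map Prod.fst).prod = w ∧
      4 * ((L.map Prod.snd).sum : ℤ) = periodDisp (2 * n + 2) w := by
  induction hm : (periodDisp (2 * n + 2) w).toNat using Nat.strong_induction_on generalizing w
    with | _ m ih =>
  by_cases h1 : w = 1
  · subst h1
    exact ⟨[], by simp, rfl, by simp [periodDisp]⟩
  obtain ⟨t, c, ht, htC, htt, hc, hD⟩ := hw.exists_transp_mul h1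
  have := periodDisp_nonneg (2 * n + 2) (t * w)
  obtain ⟨L, hL, hprod, hsum⟩ := ih _ (by omega) (htC.mul hw) rfl
  refine ⟨(t, c) :: L, List.forall_mem_cons.mpr ⟨ht, hL⟩, ?_, ?_⟩
  · simp [hprod, ← mul_assoc, htt]
  · simp only [List.map_cons, List.sum_cons, Nat.cast_add]
    linarith

end IsAffCPerm

lemma costAffC_le {n : ℕ} {w : Perm ℤ} {L : List (Perm ℤ × ℕ)}
    (hL : ∀ p ∈ L, IsAffCTransp n p.1 p.2) (hprod : (L.map Prod.fst).prod = w) :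
    costAffC n w ≤ (L.map Prod.snd).sum :=
  Nat.sInf_le ⟨L, hL, hprod, rfl⟩

lemma exists_sum_eq_costAffC {n : ℕ} {w : Perm ℤ} {L : List (Perm ℤ × ℕ)}
    (hL : ∀ p ∈ L, IsAffCTransp n p.1 p.2) (hprod : (L.map Prod.fst).prod = w) :
    ∃ L' : List (Perm ℤ × ℕ), (∀ p ∈ L', IsAffCTransp n p.1 p.2) ∧
      (L'.map Prod.fst).prod = w ∧ costAffC n w = (L'.map Prod.snd).sum :=
  Nat.sInf_mem (s := {c | ∃ L : List (Perm ℤ × ℕ), (∀ p ∈ L, IsAffCTransp n p.1 p.2) ∧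
    (L.map Prod.fst).prod = w ∧ c = (L.map Prod.snd).sum}) ⟨_, L, hL, hprod, rfl⟩

/-- For every affine signed permutation `w ∈ S̃^C_n`, the cost of `w` equals half of
its total displacement: `$(w) = tvd(w)/2`. -/
theorem cost_eq_half_tvd_affineC (n : ℕ) (w : Equiv.Perm ℤ) (hw : IsAffCPerm n w) :
    2 * costAffC n w = tvdAffC n w := by
  obtain ⟨L, hL, hprod, hsum⟩ := hw.exists_factorization
  obtain ⟨L', hL', hprod', hcost⟩ := exists_sum_eq_costAffC hL hprod
  have hupper := costAffC_le hL hprod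
  have hlower := periodDisp_list_prod_le L' hL'
  rw [hprod', ← hcost] at hlower
  have htvd := hw.periodDisp_eq
  omega
end

section
/- For every permutation w of {1,…,n}, the cost of w is at least half of its total displacement: $(w) ≥ tvd(w)/2. -/
lemma tvdA_mul_le (n : ℕ) (u v : Equiv.Perm (Fin n)) :
    tvdA n (u * v) ≤ tvdA n u + tvdA n v := by
  unfold tvdA
  have h1 : ∑ i : Fin n, (((u i : ℕ) : ℤ) - ((i : ℕ) : ℤ)).natAbs
      = ∑ i : Fin n, (((u (v i) : ℕ) : ℤ) - ((v i : ℕ) : ℤ)).natAbs :=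
    (Equiv.sum_comp v fun i => (((u i : ℕ) : ℤ) - ((i : ℕ) : ℤ)).natAbs).symm
  rw [h1, ← Finset.sum_add_distrib]
  apply Finset.sum_le_sum
  intro i _
  have : (((u (v i) : ℕ) : ℤ) - ((i : ℕ) : ℤ))
      = ((((u (v i) : ℕ) : ℤ) - ((v i : ℕ) : ℤ)) + (((v i : ℕ) : ℤ) - ((i : ℕ) : ℤ))) := by
    ring
  simp only [Equiv.Perm.mul_apply]
  rw [this]
  exact Int.natAbs_add_le _ _

lemma tvdA_swap_le (n : ℕ) (x y : Fin n) :
    tvdA n (Equiv.swap x y) ≤ 2 * (((x : ℕ) : ℤ) - ((y : ℕ) : ℤ)).natAbs := by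
  unfold tvdA
  have hsub : ({x, y} : Finset (Fin n)) ⊆ Finset.univ := Finset.subset_univ _
  rw [← Finset.sum_subset hsub ?h]
  · by_cases hxy : x = y
    · subst hxy
      simp
    · rw [Finset.sum_pair hxy]
      simp [Equiv.swap_apply_left, Equiv.swap_apply_right]
      have : (((y : ℕ) : ℤ) - ((x : ℕ) : ℤ)).natAbs
          = (((x : ℕ) : ℤ) - ((y : ℕ) : ℤ)).natAbs := by
        rw [← Int.natAbs_neg]; ring_nf
      omega
  · intro i _ hi
    simp only [Finset.mem_insert, Finset.mem_singleton, not_or] at hi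
    rw [Equiv.swap_apply_of_ne_of_ne hi.1 hi.2]
    simp

lemma tvdA_list_le (n : ℕ) (L : List (Fin n × Fin n)) :
    tvdA n (L.map fun p => Equiv.swap p.1 p.2).prod
      ≤ 2 * (L.map fun p => (((p.1 : ℕ) : ℤ) - ((p.2 : ℕ) : ℤ)).natAbs).sum := by
  induction L with
  | nil => simp [tvdA]
  | cons p L ih =>
    simp only [List.map_cons, List.prod_cons, List.sum_cons]
    calc tvdA n (Equiv.swap p.1 p.2 * (L.map fun p => Equiv.swap p.1 p.2).prod)
        ≤ tvdA n (Equiv.swap p.1 p.2)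
          + tvdA n (L.map fun p => Equiv.swap p.1 p.2).prod := tvdA_mul_le _ _ _
      _ ≤ 2 * (((p.1 : ℕ) : ℤ) - ((p.2 : ℕ) : ℤ)).natAbs
          + 2 * (L.map fun p => (((p.1 : ℕ) : ℤ) - ((p.2 : ℕ) : ℤ)).natAbs).sum :=
          Nat.add_le_add (tvdA_swap_le n p.1 p.2) ih
      _ = _ := by ring

/-- For every permutation `w` of `{1,…,n}`, the cost of `w` is at least half of its
total displacement: `$(w) ≥ tvd(w)/2`. -/
theorem cost_ge_half_tvd_typeA (n : ℕ) (w : Equiv.Perm (Fin n)) :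
    tvdA n w ≤ 2 * costA n w := by
  have hne : {c : ℕ | ∃ L : List (Fin n × Fin n),
      (∀ p ∈ L, p.1 ≠ p.2) ∧
      (L.map fun p => Equiv.swap p.1 p.2).prod = w ∧
      c = (L.map fun p => (((p.1 : ℕ) : ℤ) - ((p.2 : ℕ) : ℤ)).natAbs).sum}.Nonempty := by
    obtain ⟨l, hl, hswap⟩ := (Equiv.Perm.truncSwapFactors w).out
    have : ∀ l : List (Equiv.Perm (Fin n)), (∀ g ∈ l, g.IsSwap) →
        ∃ L : List (Fin n × Fin n), (∀ p ∈ L, p.1 ≠ p.2) ∧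
          (L.map fun p => Equiv.swap p.1 p.2).prod = l.prod := by
      intro l
      induction l with
      | nil => intro _; exact ⟨[], by simp, by simp⟩
      | cons g l ih =>
        intro h
        obtain ⟨x, y, hxy, hg⟩ := h g (by simp)
        obtain ⟨L, hL1, hL2⟩ := ih (fun g hg => h g (by simp [hg]))
        exact ⟨(x, y) :: L, by
          intro p hp
          rcases List.mem_cons.mp hp with h | h
          · subst h; exact hxy
          · exact hL1 p h, by simp [hL2, hg]⟩
    obtain ⟨L, hL1, hL2⟩ := this l hswap
    exact ⟨_, L, hL1, by rw [hL2, hl], rfl⟩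
  obtain ⟨L, hL1, hL2, hL3⟩ := Nat.sInf_mem hne
  rw [costA, hL3]
  rw [← hL2]
  exact tvdA_list_le n L
end

section
/- For every affine permutation w in the affine symmetric group S̃_n, the cost of w is at least half of its total displacement: $(w) ≥ tvd(w)/2. -/
/-!
Left multiplication by the transposition `⟨(x y)⟩` moves the value lying in the residue class of
`x` up by `y - x` and the one lying in the class of `y` down by `y - x`. The window values
`w 1, …, w n` lie in distinct residue classes, so at most two of them move, each by the cost, and
the total displacement grows by at most twice the cost; summing over a factorization bounds `tvd`
by twice the cost of every factorization. The minimum is taken over a nonempty set because the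
transpositions generate `S̃_n`: one transposition per misplaced class makes every `w i ≡ i`, and
then pairs of transpositions lower one displacement by `n` and raise another by `n`, until `tvd`
vanishes.
-/

/-- An affine permutation in the affine symmetric group `S̃_n`: a bijection `w : ℤ → ℤ`
with `w(i + n) = w(i) + n` for all `i` and `∑_{i=1}^n w(i) = ∑_{i=1}^n i`. -/
def IsAffinePerm (n : ℕ) (w : Equiv.Perm ℤ) : Prop :=
  (∀ i : ℤ, w (i + n) = w i + n) ∧
  (∑ i ∈ Finset.Icc (1 : ℤ) (n : ℤ), w i) = ∑ i ∈ Finset.Icc (1 : ℤ) (n : ℤ), i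

/-- Total displacement: `tvd(w) = ∑_{i=1}^n |w(i) − i|`. -/
noncomputable def tvdAffA (n : ℕ) (w : Equiv.Perm ℤ) : ℕ :=
  ∑ i ∈ Finset.Icc (1 : ℤ) (n : ℤ), (w i - i).natAbs

/-- `t` is a transposition `⟨(x y)⟩` of `S̃_n` of cost `c`: for some `x < y` with
`x ≢ y (mod n)`, `t` exchanges `x + kn` and `y + kn` for every `k ∈ ℤ` and fixes
all other integers, and `c = y − x`. -/
def IsAffATransp (n : ℕ) (t : Equiv.Perm ℤ) (c : ℕ) : Prop :=
  ∃ x y : ℤ, x < y ∧ ¬ ((n : ℤ) ∣ (y - x)) ∧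
    (∀ k : ℤ, t (x + k * n) = y + k * n) ∧
    (∀ k : ℤ, t (y + k * n) = x + k * n) ∧
    (∀ z : ℤ, (∀ k : ℤ, z ≠ x + k * n ∧ z ≠ y + k * n) → t z = z) ∧
    (c : ℤ) = y - x

/-- The cost of `w ∈ S̃_n`: the minimum of `$(t₁) + ⋯ + $(t_k)` over all factorizations
`w = t₁ ⋯ t_k` into transpositions of `S̃_n`. -/
noncomputable def costAffA (n : ℕ) (w : Equiv.Perm ℤ) : ℕ :=
  sInf {c : ℕ | ∃ L : List (Equiv.Perm ℤ × ℕ),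
    (∀ p ∈ L, IsAffATransp n p.1 p.2) ∧
    (L.map Prod.fst).prod = w ∧ c = (L.map Prod.snd).sum}

open Finset

namespace Equiv.Perm

variable {α : Type*} [AddGroup α] {w : Perm α} {a : α}

theorem commute_addRight_iff : Commute w (Equiv.addRight a) ↔ ∀ i, w (i + a) = w i + a := by
  simp [Commute, SemiconjBy, Perm.ext_iff]

theorem apply_add_zsmul_of_commute (hw : Commute w (Equiv.addRight a)) (i : α) (k : ℤ) :
    w (i + k • a) = w i + k • a := by
  simpa using Perm.ext_iff.mp (hw.zpow_right k).eq i

end Equiv.Perm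

theorem Finset.sum_eq_of_transfer {ι M : Type*} [DecidableEq ι] [AddCommGroup M] {f g : ι → M}
    {s : Finset ι} {a b : ι} {d : M} (ha : a ∈ s) (hb : b ∈ s) (hab : a ≠ b)
    (hga : g a = f a + d) (hgb : g b = f b - d) (hg : ∀ i ∈ s, i ≠ a → i ≠ b → g i = f i) :
    ∑ i ∈ s, g i = ∑ i ∈ s, f i := by
  have h : ∀ i ∈ s, g i = f i + ((if i = a then d else 0) - (if i = b then d else 0)) := by
    intro i hi
    by_cases hia : i = a
    · subst hia; simp [hga, hab]
    by_cases hib : i = b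
    · subst hib; simp [hgb, hia, sub_eq_add_neg]
    simp [hg i hi hia hib, hia, hib]
  rw [sum_congr rfl h, sum_add_distrib, sum_sub_distrib, sum_ite_eq', sum_ite_eq', if_pos ha,
    if_pos hb, sub_self, add_zero]

section

variable {n : ℕ} {w : Equiv.Perm ℤ}

theorem eq_of_mem_Icc_of_dvd_sub {i j : ℤ} (hi : i ∈ Icc (1 : ℤ) n) (hj : j ∈ Icc (1 : ℤ) n)
    (h : (n : ℤ) ∣ i - j) : i = j := by
  rw [mem_Icc] at hi hj
  have := Int.eq_zero_of_abs_lt_dvd h (by rw [abs_lt]; omega)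
  omega

theorem exists_mem_Icc_add_mul (hn : 0 < n) (z : ℤ) :
    ∃ i ∈ Icc (1 : ℤ) n, ∃ k : ℤ, z = i + k * n := by
  have h0 := Int.emod_nonneg (z - 1) (by omega : (n : ℤ) ≠ 0)
  have h1 := Int.emod_lt_of_pos (z - 1) (by omega : (0 : ℤ) < n)
  refine ⟨(z - 1) % n + 1, mem_Icc.mpr ⟨by omega, by omega⟩, (z - 1) / n, ?_⟩
  linear_combination -(Int.mul_ediv_add_emod (z - 1) n)

theorem eq_of_dvd_apply_sub (hw : Commute w (Equiv.addRight (n : ℤ))) {i j : ℤ}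
    (hi : i ∈ Icc (1 : ℤ) n) (hj : j ∈ Icc (1 : ℤ) n) (h : (n : ℤ) ∣ w i - w j) : i = j := by
  obtain ⟨k, hk⟩ := h
  have : w (j + k * n) = w i := by
    rw [← smul_eq_mul, Equiv.Perm.apply_add_zsmul_of_commute hw]; linear_combination -hk
  exact eq_of_mem_Icc_of_dvd_sub hi hj ⟨k, by linear_combination (w.injective this).symm⟩

theorem card_filter_dvd_apply_sub_le_one (hw : Commute w (Equiv.addRight (n : ℤ))) (v : ℤ) :
    #{i ∈ Icc (1 : ℤ) n | (n : ℤ) ∣ w i - v} ≤ 1 := by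
  refine card_le_one.mpr fun i hi j hj => ?_
  rw [mem_filter] at hi hj
  exact eq_of_dvd_apply_sub hw hi.1 hj.1 (by simpa using dvd_sub hi.2 hj.2)

theorem eq_one_of_tvdAffA_eq_zero (hn : 0 < n) (hw : Commute w (Equiv.addRight (n : ℤ)))
    (h : tvdAffA n w = 0) : w = 1 := by
  ext z
  obtain ⟨i, hi, k, rfl⟩ := exists_mem_Icc_add_mul hn z
  have : w i = i := by have := sum_eq_zero_iff.mp h i hi; omega
  rw [Equiv.Perm.one_apply, ← smul_eq_mul, Equiv.Perm.apply_add_zsmul_of_commute hw, this]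

def affSwap (m x y z : ℤ) : ℤ :=
  if m ∣ z - x then z + (y - x) else if m ∣ z - y then z - (y - x) else z

section affSwap

variable {m x y z : ℤ}

theorem affSwap_of_dvd_left (h : m ∣ z - x) : affSwap m x y z = z + (y - x) := if_pos h

theorem affSwap_of_dvd_right (hxy : ¬ m ∣ y - x) (h : m ∣ z - y) :
    affSwap m x y z = z - (y - x) := by
  have : ¬ m ∣ z - x := fun hx => hxy (by simpa using dvd_sub hx h)
  rw [affSwap, if_neg this, if_pos h]

theorem affSwap_of_not_dvd (hx : ¬ m ∣ z - x) (hy : ¬ m ∣ z - y) : affSwap m x y z = z := by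
  rw [affSwap, if_neg hx, if_neg hy]

theorem affSwap_comm (hxy : ¬ m ∣ y - x) : affSwap m x y = affSwap m y x := by
  funext z
  by_cases hx : m ∣ z - x
  · rw [affSwap_of_dvd_left hx, affSwap_of_dvd_right (by rwa [← dvd_neg, neg_sub]) hx]; ring
  by_cases hy : m ∣ z - y
  · rw [affSwap_of_dvd_right hxy hy, affSwap_of_dvd_left hy]; ring
  rw [affSwap_of_not_dvd hx hy, affSwap_of_not_dvd hy hx]

theorem affSwap_involutive (hxy : ¬ m ∣ y - x) : Function.Involutive (affSwap m x y) := by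
  intro z
  by_cases hx : m ∣ z - x
  · have : m ∣ z + (y - x) - y := by rwa [show z + (y - x) - y = z - x by ring]
    rw [affSwap_of_dvd_left hx, affSwap_of_dvd_right hxy this]; ring
  by_cases hy : m ∣ z - y
  · have : m ∣ z - (y - x) - x := by rwa [show z - (y - x) - x = z - y by ring]
    rw [affSwap_of_dvd_right hxy hy, affSwap_of_dvd_left this]; ring
  rw [affSwap_of_not_dvd hx hy, affSwap_of_not_dvd hx hy]

theorem affSwap_add_self (z : ℤ) : affSwap m x y (z + m) = affSwap m x y z + m := by
  have h : ∀ v, m ∣ z + m - v ↔ m ∣ z - v := fun v => by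
    rw [show z + m - v = z - v + m by ring, dvd_add_self_right]
  simp only [affSwap, h]
  split_ifs <;> ring

theorem natAbs_affSwap_sub (hxy : ¬ m ∣ y - x) (z : ℤ) :
    (affSwap m x y z - z).natAbs =
      (if m ∣ z - x then (y - x).natAbs else 0) + (if m ∣ z - y then (y - x).natAbs else 0) := by
  by_cases hx : m ∣ z - x
  · have hy : ¬ m ∣ z - y := fun hy => hxy (by simpa using dvd_sub hx hy)
    simp [affSwap_of_dvd_left hx, hx, hy]
  by_cases hy : m ∣ z - y
  · simp [affSwap_of_dvd_right hxy hy, hx, hy]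
    omega
  simp [affSwap_of_not_dvd hx hy, hx, hy]

end affSwap

theorem isAffATransp_iff {t : Equiv.Perm ℤ} {c : ℕ} :
    IsAffATransp n t c ↔
      ∃ x y : ℤ, x < y ∧ ¬ (n : ℤ) ∣ y - x ∧ ⇑t = affSwap n x y ∧ (c : ℤ) = y - x := by
  constructor
  · rintro ⟨x, y, hlt, hxy, hx, hy, hfix, hc⟩
    refine ⟨x, y, hlt, hxy, funext fun z => ?_, hc⟩
    by_cases hzx : (n : ℤ) ∣ z - x
    · obtain ⟨k, hk⟩ := hzx
      rw [affSwap_of_dvd_left ⟨k, hk⟩, show z = x + k * n by linear_combination hk, hx]; ring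
    by_cases hzy : (n : ℤ) ∣ z - y
    · obtain ⟨k, hk⟩ := hzy
      rw [affSwap_of_dvd_right hxy ⟨k, hk⟩, show z = y + k * n by linear_combination hk, hy]; ring
    rw [affSwap_of_not_dvd hzx hzy]
    exact hfix z fun k => ⟨fun h => hzx ⟨k, by rw [h]; ring⟩, fun h => hzy ⟨k, by rw [h]; ring⟩⟩
  · rintro ⟨x, y, hlt, hxy, ht, hc⟩
    refine ⟨x, y, hlt, hxy, fun k => ?_, fun k => ?_, fun z hz => ?_, hc⟩
    · rw [ht, affSwap_of_dvd_left ⟨k, by ring⟩]; ring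
    · rw [ht, affSwap_of_dvd_right hxy ⟨k, by ring⟩]; ring
    · rw [ht, affSwap_of_not_dvd]
      · rintro ⟨k, hk⟩; exact (hz k).1 (by linear_combination hk)
      · rintro ⟨k, hk⟩; exact (hz k).2 (by linear_combination hk)

theorem exists_isAffATransp_coe_eq_affSwap {x y : ℤ} (hxy : ¬ (n : ℤ) ∣ y - x) :
    ∃ t c, IsAffATransp n t c ∧ ⇑t = affSwap n x y := by
  wlog hlt : x < y generalizing x y
  · have hyx : ¬ (n : ℤ) ∣ x - y := by rwa [← dvd_neg, neg_sub]
    rw [affSwap_comm hxy]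
    exact this hyx (lt_of_le_of_ne (not_lt.mp hlt) fun h => hxy (by simp [h]))
  exact ⟨(affSwap_involutive hxy).toPerm, (y - x).toNat,
    isAffATransp_iff.mpr ⟨x, y, hlt, hxy, rfl, by omega⟩, rfl⟩

namespace IsAffATransp

variable {t u : Equiv.Perm ℤ} {c : ℕ}

theorem commute_addRight (ht : IsAffATransp n t c) : Commute t (Equiv.addRight (n : ℤ)) := by
  obtain ⟨x, y, -, -, ht, -⟩ := isAffATransp_iff.mp ht
  exact Equiv.Perm.commute_addRight_iff.mpr fun i => by rw [ht]; exact affSwap_add_self i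

theorem mul_self (ht : IsAffATransp n t c) : t * t = 1 := by
  obtain ⟨x, y, -, hxy, ht, -⟩ := isAffATransp_iff.mp ht
  ext z
  simp [ht, affSwap_involutive hxy z]

theorem sum_natAbs_apply_sub_le (ht : IsAffATransp n t c)
    (hu : Commute u (Equiv.addRight (n : ℤ))) :
    ∑ i ∈ Icc (1 : ℤ) n, (t (u i) - u i).natAbs ≤ 2 * c := by
  obtain ⟨x, y, hlt, hxy, ht, hc⟩ := isAffATransp_iff.mp ht
  have hc' : (y - x).natAbs = c := by omega
  simp only [ht, natAbs_affSwap_sub hxy, hc', sum_add_distrib, ← sum_filter, sum_const,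
    smul_eq_mul]
  have hx := Nat.mul_le_mul_right c (card_filter_dvd_apply_sub_le_one hu x)
  have hy := Nat.mul_le_mul_right c (card_filter_dvd_apply_sub_le_one hu y)
  linarith

end IsAffATransp

theorem tvdAffA_mul_le {t u : Equiv.Perm ℤ} {c : ℕ} (ht : IsAffATransp n t c)
    (hu : Commute u (Equiv.addRight (n : ℤ))) : tvdAffA n (t * u) ≤ 2 * c + tvdAffA n u := by
  calc tvdAffA n (t * u)
      ≤ ∑ i ∈ Icc (1 : ℤ) n, ((t (u i) - u i).natAbs + (u i - i).natAbs) :=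
        sum_le_sum fun i _ => by simpa using Int.natAbs_add_le (t (u i) - u i) (u i - i)
    _ ≤ 2 * c + tvdAffA n u := by
        rw [sum_add_distrib]; exact Nat.add_le_add_right (ht.sum_natAbs_apply_sub_le hu) _

theorem tvdAffA_prod_le (L : List (Equiv.Perm ℤ × ℕ)) (hL : ∀ p ∈ L, IsAffATransp n p.1 p.2) :
    tvdAffA n (L.map Prod.fst).prod ≤ 2 * (L.map Prod.snd).sum := by
  induction L with
  | nil => simp [tvdAffA]
  | cons p L ih =>
    have hL' : ∀ q ∈ L, IsAffATransp n q.1 q.2 := fun q hq => hL q (List.mem_cons_of_mem p hq)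
    have hu : Commute (L.map Prod.fst).prod (Equiv.addRight (n : ℤ)) :=
      Commute.list_prod_left _ _ fun t ht => by
        obtain ⟨q, hq, rfl⟩ := List.mem_map.mp ht
        exact (hL' q hq).commute_addRight
    have := tvdAffA_mul_le (hL p List.mem_cons_self) hu
    have := ih hL'
    simp only [List.map_cons, List.prod_cons, List.sum_cons]
    omega

def HasTranspFactorization (n : ℕ) (w : Equiv.Perm ℤ) : Prop :=
  ∃ L : List (Equiv.Perm ℤ × ℕ), (∀ p ∈ L, IsAffATransp n p.1 p.2) ∧ (L.map Prod.fst).prod = w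

theorem HasTranspFactorization.one : HasTranspFactorization n 1 := ⟨[], by simp, rfl⟩

theorem HasTranspFactorization.of_transp_mul {t : Equiv.Perm ℤ} {c : ℕ}
    (ht : IsAffATransp n t c) (h : HasTranspFactorization n (t * w)) :
    HasTranspFactorization n w := by
  obtain ⟨L, hL, hprod⟩ := h
  refine ⟨(t, c) :: L, ?_, ?_⟩
  · simpa [ht] using hL
  · rw [List.map_cons, List.prod_cons, hprod, ← mul_assoc, ht.mul_self, one_mul]

/-- `w'` is `t * w` for the transposition `t = ⟨(w a, w a + d)⟩`. -/
theorem exists_transfer (hw : IsAffinePerm n w) {a b : ℤ} (ha : a ∈ Icc (1 : ℤ) n)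
    (hb : b ∈ Icc (1 : ℤ) n) (hab : a ≠ b) (d : ℤ) (hd : (n : ℤ) ∣ w b - w a - d) :
    ∃ w', (HasTranspFactorization n w' → HasTranspFactorization n w) ∧ IsAffinePerm n w' ∧
      w' a = w a + d ∧ w' b = w b - d ∧ ∀ i ∈ Icc (1 : ℤ) n, i ≠ a → i ≠ b → w' i = w i := by
  have hcomm := Equiv.Perm.commute_addRight_iff.mpr hw.1
  have hsep : ∀ {i j}, i ∈ Icc (1 : ℤ) n → j ∈ Icc (1 : ℤ) n → i ≠ j → ¬ (n : ℤ) ∣ w i - w j :=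
    fun hi hj hij h => hij (eq_of_dvd_apply_sub hcomm hi hj h)
  have hxy : ¬ (n : ℤ) ∣ w a + d - w a := fun h =>
    hsep hb ha hab.symm (by simpa using dvd_add hd h)
  obtain ⟨t, c, ht, hteq⟩ := exists_isAffATransp_coe_eq_affSwap hxy
  have hta : (t * w) a = w a + d := by
    rw [Equiv.Perm.mul_apply, hteq, affSwap_of_dvd_left (by simp)]; ring
  have htb : (t * w) b = w b - d := by
    rw [Equiv.Perm.mul_apply, hteq, affSwap_of_dvd_right hxy (by simpa [sub_sub] using hd)]; ring
  have hto : ∀ i ∈ Icc (1 : ℤ) n, i ≠ a → i ≠ b → (t * w) i = w i := fun i hi hia hib => by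
    rw [Equiv.Perm.mul_apply, hteq, affSwap_of_not_dvd (hsep hi ha hia)
      fun h => hsep hi hb hib <| by
        rw [show w i - w b = w i - (w a + d) - (w b - w a - d) by ring]; exact dvd_sub h hd]
  refine ⟨t * w, HasTranspFactorization.of_transp_mul ht,
    ⟨Equiv.Perm.commute_addRight_iff.mp (ht.commute_addRight.mul_left hcomm), ?_⟩, hta, htb, hto⟩
  rw [Finset.sum_eq_of_transfer ha hb hab hta htb hto, hw.2]

theorem exists_pos_and_neg_apply_sub (hw : IsAffinePerm n w) (h0 : tvdAffA n w ≠ 0) :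
    (∃ a ∈ Icc (1 : ℤ) n, 0 < w a - a) ∧ ∃ b ∈ Icc (1 : ℤ) n, w b - b < 0 := by
  have hsum : ∑ i ∈ Icc (1 : ℤ) n, (w i - i) = 0 := by rw [sum_sub_distrib, hw.2, sub_self]
  obtain ⟨i, hi, hne⟩ : ∃ i ∈ Icc (1 : ℤ) n, w i - i ≠ 0 := by
    by_contra! h
    exact h0 (sum_eq_zero fun i hi => by simp [h i hi])
  refine ⟨exists_pos_of_sum_zero_of_exists_nonzero _ hsum ⟨i, hi, hne⟩, ?_⟩
  obtain ⟨b, hb, hpos⟩ := exists_pos_of_sum_zero_of_exists_nonzero (fun i => -(w i - i))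
    (by rw [sum_neg_distrib, hsum, neg_zero]) ⟨i, hi, neg_ne_zero.mpr hne⟩
  exact ⟨b, hb, by linarith⟩

-- Exchange the values at `a` and `b`, then exchange them back shifted by `n`.
theorem exists_tvdAffA_lt (hn : 0 < n) (hw : IsAffinePerm n w)
    (hdvd : ∀ i ∈ Icc (1 : ℤ) n, (n : ℤ) ∣ w i - i) (h0 : tvdAffA n w ≠ 0) :
    ∃ w', (HasTranspFactorization n w' → HasTranspFactorization n w) ∧ IsAffinePerm n w' ∧
      (∀ i ∈ Icc (1 : ℤ) n, (n : ℤ) ∣ w' i - i) ∧ tvdAffA n w' < tvdAffA n w := by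
  obtain ⟨⟨a, ha, hpos⟩, b, hb, hneg⟩ := exists_pos_and_neg_apply_sub hw h0
  have hab : a ≠ b := by rintro rfl; omega
  have hna : (n : ℤ) ≤ w a - a := Int.le_of_dvd hpos (hdvd a ha)
  have hnb : (n : ℤ) ≤ b - w b := Int.le_of_dvd (by omega) (by simpa using (hdvd b hb).neg_right)
  obtain ⟨w₁, hf₁, hw₁, ha₁, hb₁, ho₁⟩ := exists_transfer hw ha hb hab (w b - w a) (by simp)
  obtain ⟨w₂, hf₂, hw₂, ha₂, hb₂, ho₂⟩ :=
    exists_transfer hw₁ ha hb hab (w a - n - w b) ⟨1, by rw [ha₁, hb₁]; ring⟩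
  have ha' : w₂ a - a = (w a - a) - n := by rw [ha₂, ha₁]; ring
  have hb' : w₂ b - b = (w b - b) + n := by rw [hb₂, hb₁]; ring
  have ho : ∀ i ∈ Icc (1 : ℤ) n, i ≠ a → i ≠ b → w₂ i = w i := fun i hi hia hib => by
    rw [ho₂ i hi hia hib, ho₁ i hi hia hib]
  refine ⟨w₂, hf₁ ∘ hf₂, hw₂, fun i hi => ?_, sum_lt_sum (fun i hi => ?_) ⟨a, ha, by omega⟩⟩
  · by_cases hia : i = a
    · subst hia; rw [ha']; exact dvd_sub (hdvd i hi) dvd_rfl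
    by_cases hib : i = b
    · subst hib; rw [hb']; exact dvd_add (hdvd i hi) dvd_rfl
    rw [ho i hi hia hib]; exact hdvd i hi
  · by_cases hia : i = a
    · subst hia; omega
    by_cases hib : i = b
    · subst hib; omega
    rw [ho i hi hia hib]

theorem hasTranspFactorization_of_forall_dvd (hn : 0 < n) (hw : IsAffinePerm n w)
    (hdvd : ∀ i ∈ Icc (1 : ℤ) n, (n : ℤ) ∣ w i - i) : HasTranspFactorization n w := by
  induction hm : tvdAffA n w using Nat.strong_induction_on generalizing w with
  | _ m ih =>
    by_cases h0 : tvdAffA n w = 0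
    · rw [eq_one_of_tvdAffA_eq_zero hn (Equiv.Perm.commute_addRight_iff.mpr hw.1) h0]
      exact HasTranspFactorization.one
    obtain ⟨w', hf, hw', hdvd', hlt⟩ := exists_tvdAffA_lt hn hw hdvd h0
    exact hf (ih _ (hm ▸ hlt) hw' hdvd' rfl)

noncomputable def misplacedResidues (n : ℕ) (w : Equiv.Perm ℤ) : Finset ℤ :=
  {i ∈ Icc (1 : ℤ) n | ¬ (n : ℤ) ∣ w i - i}

-- Exchanging the classes of `w r` and `r` fixes `r`; the position holding the class of `r` was
-- misplaced already.
theorem exists_card_misplacedResidues_lt (hn : 0 < n) (hw : IsAffinePerm n w) {r : ℤ}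
    (hr : r ∈ misplacedResidues n w) :
    ∃ w', (HasTranspFactorization n w' → HasTranspFactorization n w) ∧ IsAffinePerm n w' ∧
      #(misplacedResidues n w') < #(misplacedResidues n w) := by
  obtain ⟨hrI, hbad⟩ := mem_filter.mp hr
  obtain ⟨j, hj, k, hk⟩ := exists_mem_Icc_add_mul hn (w.symm r)
  have hwj : w j = r - k * n := by
    have := Equiv.Perm.apply_add_zsmul_of_commute (Equiv.Perm.commute_addRight_iff.mpr hw.1) j k
    rw [smul_eq_mul, ← hk, Equiv.apply_symm_apply] at this
    linarith
  have hjr : r ≠ j := by rintro rfl; exact hbad ⟨-k, by rw [hwj]; ring⟩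
  obtain ⟨w', hf, hw', hr', -, ho⟩ :=
    exists_transfer hw hrI hj hjr (r - w r) ⟨-k, by rw [hwj]; ring⟩
  have hwr' : w' r = r := by rw [hr']; ring
  refine ⟨w', hf, hw', card_lt_card ((ssubset_iff_of_subset fun i hi => ?_).mpr
    ⟨r, hr, by simp [misplacedResidues, hwr']⟩)⟩
  obtain ⟨hi, hbad'⟩ := mem_filter.mp hi
  refine mem_filter.mpr ⟨hi, ?_⟩
  by_cases hir : i = r
  · subst hir; simp [hwr'] at hbad'
  by_cases hij : i = j
  · subst hij
    refine fun h => hjr (eq_of_mem_Icc_of_dvd_sub hrI hi ?_)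
    rw [show r - i = (w i - i) + k * n by rw [hwj]; ring]
    exact dvd_add h (dvd_mul_left _ _)
  rwa [← ho i hi hir hij]

theorem hasTranspFactorization_of_isAffinePerm (hn : 0 < n) (hw : IsAffinePerm n w) :
    HasTranspFactorization n w := by
  induction hm : #(misplacedResidues n w) using Nat.strong_induction_on generalizing w with
  | _ m ih =>
    rcases (misplacedResidues n w).eq_empty_or_nonempty with h0 | ⟨r, hr⟩
    · exact hasTranspFactorization_of_forall_dvd hn hw fun i hi =>
        not_not.mp (filter_eq_empty_iff.mp h0 hi)
    obtain ⟨w', hf, hw', hlt⟩ := exists_card_misplacedResidues_lt hn hw hr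
    exact hf (ih _ (hm ▸ hlt) hw' rfl)

end

/-- For every affine permutation `w ∈ S̃_n`, the cost of `w` is at least half of its
total displacement: `$(w) ≥ tvd(w)/2`. -/
theorem cost_ge_half_tvd_affineA (n : ℕ) (w : Equiv.Perm ℤ) (hw : IsAffinePerm n w) :
    tvdAffA n w ≤ 2 * costAffA n w := by
  rcases Nat.eq_zero_or_pos n with rfl | hn
  · simp [tvdAffA]
  obtain ⟨L, hL, hprod⟩ := hasTranspFactorization_of_isAffinePerm hn hw
  obtain ⟨L', hL', rfl, hcost⟩ := Nat.sInf_mem (⟨_, L, hL, hprod, rfl⟩ : Set.Nonempty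
    {c : ℕ | ∃ L : List (Equiv.Perm ℤ × ℕ), (∀ p ∈ L, IsAffATransp n p.1 p.2) ∧
      (L.map Prod.fst).prod = w ∧ c = (L.map Prod.snd).sum})
  rw [costAffA, hcost]
  exact tvdAffA_prod_le L' hL'
end

section
/- For every affine signed permutation w in the group S̃^C_n, the cost of w is at least half of its total displacement: $(w) ≥ tvd(w)/2. -/
/-!
A transposition of cost `c` is a "class swap" `z ↦ z ± (y - x)` on the classes of `±x, ±y`
modulo `2n+2`. Since `w i ≡ ±w j` forces `i ≡ ±j`, at most one of `w 1, …, w n` lies in each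
class `±a`: so a first-kind transposition moves at most two of them by `c`, a second-kind one
(where `y ≡ -x`) at most one by `2c`. Hence left multiplication by a transposition of cost `c`
raises the total displacement by at most `2c`, and `tvd(w) ≤ 2 · $(t₁) + ⋯ + 2 · $(t_k)` for
every factorization of `w`. As the cost is an infimum (and `sInf ∅ = 0`), one also needs that
some factorization exists: `w` is reduced to the identity by fixing `1, …, n` in turn, each
step using one or two class swaps.
-/

open Finset

theorem not_dvd_of_lt {N d : ℤ} (h0 : d ≠ 0) (h1 : -N < d) (h2 : d < N) : ¬N ∣ d :=
  fun h => h0 (Int.eq_zero_of_abs_lt_dvd h (abs_lt.2 ⟨h1, h2⟩))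

theorem apply_eq_add_of_dvd {f : ℤ → ℤ} {N p q z : ℤ}
    (h : ∀ k, f (p + k * N) = q + k * N) (hz : N ∣ z - p) : f z = z + (q - p) := by
  obtain ⟨k, hk⟩ := hz
  rw [show z = p + k * N by linear_combination hk, h]
  ring

namespace IsAffCPerm

variable {n : ℕ} {w : Equiv.Perm ℤ}

theorem apply_add_mul (hw : IsAffCPerm n w) (z k : ℤ) :
    w (z + k * (2 * n + 2)) = w z + k * (2 * n + 2) := by
  have hper : Function.Periodic (fun z => w z - z) (2 * (n : ℤ) + 2) := fun z => by
    simp only [hw.2]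
    ring
  have := hper.int_mul k z
  simp only [Int.cast_id] at this
  linarith

theorem dvd_sub_iff (hw : IsAffCPerm n w) (a b : ℤ) :
    2 * (n : ℤ) + 2 ∣ w a - w b ↔ 2 * (n : ℤ) + 2 ∣ a - b := by
  constructor
  · rintro ⟨k, hk⟩
    have : a = b + k * (2 * n + 2) :=
      w.injective (by rw [hw.apply_add_mul]; linear_combination hk)
    exact ⟨k, by linear_combination this⟩
  · rintro ⟨k, hk⟩
    rw [show a = b + k * (2 * n + 2) by linear_combination hk, hw.apply_add_mul]
    exact ⟨k, by ring⟩

theorem dvd_add_iff (hw : IsAffCPerm n w) (a b : ℤ) :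
    2 * (n : ℤ) + 2 ∣ w a + w b ↔ 2 * (n : ℤ) + 2 ∣ a + b := by
  simpa [hw.1] using hw.dvd_sub_iff a (-b)

theorem card_filter_dvd_le_one (hw : IsAffCPerm n w) (a : ℤ) :
    #{i ∈ Icc 1 (n : ℤ) | 2 * (n : ℤ) + 2 ∣ w i - a ∨ 2 * (n : ℤ) + 2 ∣ w i + a} ≤ 1 := by
  refine card_le_one.2 fun i hi j hj => ?_
  simp only [mem_filter, mem_Icc] at hi hj
  have hij : 2 * (n : ℤ) + 2 ∣ i - j ∨ 2 * (n : ℤ) + 2 ∣ i + j := by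
    rw [← hw.dvd_sub_iff, ← hw.dvd_add_iff]
    rcases hi.2 with hi' | hi' <;> rcases hj.2 with hj' | hj'
    · exact Or.inl ((dvd_sub hi' hj').trans (dvd_of_eq (by ring)))
    · exact Or.inr ((dvd_add hi' hj').trans (dvd_of_eq (by ring)))
    · exact Or.inr ((dvd_add hi' hj').trans (dvd_of_eq (by ring)))
    · exact Or.inl ((dvd_sub hi' hj').trans (dvd_of_eq (by ring)))
  by_contra hne
  rcases hij with h | h <;> exact not_dvd_of_lt (by omega) (by omega) (by omega) h

theorem eq_one_of_forall_apply_eq (hw : IsAffCPerm n w)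
    (h : ∀ j : ℤ, 1 ≤ j → j ≤ n → w j = j) : w = 1 := by
  have hreflect : ∀ j, w (2 * n + 2 - j) = 2 * n + 2 - w j := fun j => by
    have := hw.apply_add_mul (-j) 1
    rw [hw.1] at this
    convert this using 2 <;> ring
  have hres : ∀ r : ℤ, 0 ≤ r → r < 2 * n + 2 → w r = r := by
    intro r hr0 hrN
    by_cases hr : r ≤ n
    · rcases hr0.eq_or_lt with rfl | hr1
      · have := hw.1 0
        rw [neg_zero] at this
        omega
      · exact h r hr1 hr
    by_cases hr' : r = n + 1
    · have := hreflect r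
      rw [show 2 * (n : ℤ) + 2 - r = r by omega] at this
      omega
    · rw [← sub_sub_cancel (2 * (n : ℤ) + 2) r, hreflect, h _ (by omega) (by omega)]
  ext z
  have hz : z = z % (2 * n + 2) + z / (2 * n + 2) * (2 * n + 2) := by
    linear_combination (Int.emod_add_mul_ediv z (2 * n + 2)).symm
  rw [Equiv.Perm.one_apply, hz, hw.apply_add_mul,
    hres _ (Int.emod_nonneg _ (by omega)) (Int.emod_lt_of_pos _ (by omega))]

end IsAffCPerm

def affCPerms (n : ℕ) : Subgroup (Equiv.Perm ℤ) where
  carrier := {w | IsAffCPerm n w}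
  one_mem' := ⟨fun _ => rfl, fun _ => rfl⟩
  mul_mem' {u v} hu hv := ⟨fun i => by simp [hv.1, hu.1], fun i => by simp [hv.2, hu.2]⟩
  inv_mem' {w} hw := by
    refine ⟨fun i => ?_, fun i => ?_⟩ <;> rw [Equiv.Perm.inv_eq_iff_eq]
    · simp [hw.1]
    · simp [hw.2]

section ClassSwap

/-- When `x + y ≡ 0 (mod N)` the two conditions of each branch coincide, so this describes the
transpositions of both kinds. -/
def classSwap (N x y z : ℤ) : ℤ :=
  if N ∣ z - x ∨ N ∣ z + y then z + (y - x)
  else if N ∣ z - y ∨ N ∣ z + x then z - (y - x) else z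

/-- Exactly what makes the two branches of `classSwap` disjoint. -/
def IsSwapPair (N x y : ℤ) : Prop :=
  ¬N ∣ y - x ∧ ¬N ∣ x + x ∧ ¬N ∣ y + y

variable {N x y z : ℤ}

theorem IsSwapPair.symm (hp : IsSwapPair N x y) : IsSwapPair N y x :=
  ⟨dvd_sub_comm.not.1 hp.1, hp.2.2, hp.2.1⟩

theorem IsSwapPair.not_and (hp : IsSwapPair N x y) (z : ℤ) :
    ¬((N ∣ z - x ∨ N ∣ z + y) ∧ (N ∣ z - y ∨ N ∣ z + x)) := by
  obtain ⟨hd, hx, hy⟩ := hp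
  rintro ⟨h1 | h1, h2 | h2⟩
  · exact hd ((dvd_sub h1 h2).trans (dvd_of_eq (by ring)))
  · exact hx ((dvd_sub h2 h1).trans (dvd_of_eq (by ring)))
  · exact hy ((dvd_sub h1 h2).trans (dvd_of_eq (by ring)))
  · exact hd ((dvd_sub h1 h2).trans (dvd_of_eq (by ring)))

theorem classSwap_of_left (h : N ∣ z - x ∨ N ∣ z + y) : classSwap N x y z = z + (y - x) :=
  if_pos h

theorem classSwap_of_right (hp : IsSwapPair N x y) (h : N ∣ z - y ∨ N ∣ z + x) :
    classSwap N x y z = z - (y - x) := by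
  rw [classSwap, if_neg fun h' => hp.not_and z ⟨h', h⟩, if_pos h]

theorem classSwap_of_not (h₁ : ¬(N ∣ z - x ∨ N ∣ z + y)) (h₂ : ¬(N ∣ z - y ∨ N ∣ z + x)) :
    classSwap N x y z = z := by
  rw [classSwap, if_neg h₁, if_neg h₂]

theorem classSwap_eq_self (hx : ¬N ∣ z - x ∧ ¬N ∣ z + x) (hy : ¬N ∣ z - y ∧ ¬N ∣ z + y) :
    classSwap N x y z = z :=
  classSwap_of_not (not_or.2 ⟨hx.1, hy.2⟩) (not_or.2 ⟨hy.1, hx.2⟩)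

theorem classSwap_apply_left (N x y : ℤ) : classSwap N x y x = y := by
  rw [classSwap_of_left (Or.inl (by simp))]
  ring

theorem classSwap_involutive (hp : IsSwapPair N x y) : Function.Involutive (classSwap N x y) := by
  intro z
  by_cases h₁ : N ∣ z - x ∨ N ∣ z + y
  · rw [classSwap_of_left h₁, classSwap_of_right hp]
    · ring
    · exact h₁.imp (fun h => h.trans (dvd_of_eq (by ring))) fun h => h.trans (dvd_of_eq (by ring))
  by_cases h₂ : N ∣ z - y ∨ N ∣ z + x
  · rw [classSwap_of_right hp h₂, classSwap_of_left]
    · ring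
    · exact h₂.imp (fun h => h.trans (dvd_of_eq (by ring))) fun h => h.trans (dvd_of_eq (by ring))
  · rw [classSwap_of_not h₁ h₂, classSwap_of_not h₁ h₂]

theorem classSwap_comm (hp : IsSwapPair N x y) : classSwap N y x = classSwap N x y := by
  funext z
  by_cases h₁ : N ∣ z - x ∨ N ∣ z + y
  · rw [classSwap_of_left h₁, classSwap_of_right hp.symm h₁]
    ring
  by_cases h₂ : N ∣ z - y ∨ N ∣ z + x
  · rw [classSwap_of_right hp h₂, classSwap_of_left h₂]
    ring
  · rw [classSwap_of_not h₁ h₂, classSwap_of_not h₂ h₁]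

theorem classSwap_add_self (N x y z : ℤ) : classSwap N x y (z + N) = classSwap N x y z + N := by
  simp only [classSwap, show ∀ a, z + N - a = z - a + N from fun a => by ring,
    show ∀ a, z + N + a = z + a + N from fun a => by ring, dvd_add_self_right]
  split_ifs <;> ring

theorem classSwap_neg (hp : IsSwapPair N x y) (z : ℤ) :
    classSwap N x y (-z) = -classSwap N x y z := by
  have e₁ : ∀ a, N ∣ -z - a ↔ N ∣ z + a := fun a => by
    rw [show -z - a = -(z + a) by ring, dvd_neg]
  have e₂ : ∀ a, N ∣ -z + a ↔ N ∣ z - a := fun a => by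
    rw [show -z + a = -(z - a) by ring, dvd_neg]
  have := hp.not_and z
  simp only [classSwap, e₁, e₂]
  split_ifs <;> first | tauto | ring

theorem natAbs_classSwap_sub_le (N x y z : ℤ) :
    (classSwap N x y z - z).natAbs ≤
      (y - x).natAbs * if (N ∣ z - x ∨ N ∣ z + y) ∨ (N ∣ z - y ∨ N ∣ z + x) then 1 else 0 := by
  unfold classSwap
  split_ifs <;> first | tauto | omega

theorem eq_classSwap {f : ℤ → ℤ} (hp : IsSwapPair N x y)
    (hx : ∀ k, f (x + k * N) = y + k * N) (hy : ∀ k, f (y + k * N) = x + k * N)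
    (hnx : ∀ k, f (-x + k * N) = -y + k * N) (hny : ∀ k, f (-y + k * N) = -x + k * N)
    (hfix : ∀ z, ¬N ∣ z - x → ¬N ∣ z - y → ¬N ∣ z + x → ¬N ∣ z + y → f z = z) :
    f = classSwap N x y := by
  funext z
  by_cases h₁ : N ∣ z - x ∨ N ∣ z + y
  · rw [classSwap_of_left h₁]
    rcases h₁ with h | h
    · exact apply_eq_add_of_dvd hx h
    · rw [apply_eq_add_of_dvd hny (by simpa using h)]
      ring
  by_cases h₂ : N ∣ z - y ∨ N ∣ z + x
  · rw [classSwap_of_right hp h₂]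
    rcases h₂ with h | h
    · rw [apply_eq_add_of_dvd hy h]
      ring
    · rw [apply_eq_add_of_dvd hnx (by simpa using h)]
      ring
  · rw [classSwap_of_not h₁ h₂]
    simp only [not_or] at h₁ h₂
    exact hfix z h₁.1 h₂.1 h₂.2 h₁.2

def classSwapPerm (hp : IsSwapPair N x y) : Equiv.Perm ℤ :=
  (classSwap_involutive hp).toPerm

theorem classSwapPerm_apply (hp : IsSwapPair N x y) (z : ℤ) :
    classSwapPerm hp z = classSwap N x y z := rfl

end ClassSwap

namespace IsAffCTransp

variable {n : ℕ} {t : Equiv.Perm ℤ} {c : ℕ}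

theorem exists_classSwap (ht : IsAffCTransp n t c) :
    ∃ x y, IsSwapPair (2 * n + 2) x y ∧ ⇑t = classSwap (2 * n + 2) x y ∧
      ((c : ℤ) = y - x ∨ (2 * (n : ℤ) + 2 ∣ x + y ∧ 2 * (c : ℤ) = y - x)) := by
  rcases ht with ⟨x, y, hxy, hd, hs, hx, hy, hnx, hny, hfix, hc⟩ |
    ⟨x, y, hxy, hs, hd, -, hx, hy, hfix, hc⟩
  · -- if `x + x = k (2n+2)` then `-x = x - k (2n+2)`, so `-y = t (-x) = y - k (2n+2)`: `y = x`
    have hp : IsSwapPair (2 * n + 2) x y := by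
      refine ⟨hd, fun ⟨k, hk⟩ => ?_, fun ⟨k, hk⟩ => ?_⟩
      · have e := hx (-k)
        rw [show x + -k * (2 * n + 2) = -x + 0 * (2 * n + 2) by linear_combination hk, hnx] at e
        linarith
      · have e := hy (-k)
        rw [show y + -k * (2 * n + 2) = -y + 0 * (2 * n + 2) by linear_combination hk, hny] at e
        linarith
    refine ⟨x, y, hp, eq_classSwap hp hx hy hnx hny fun z h₁ h₂ h₃ h₄ => hfix z fun k => ?_, .inl hc⟩
    exact ⟨fun e => h₁ ⟨k, by linear_combination e⟩, fun e => h₂ ⟨k, by linear_combination e⟩,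
      fun e => h₃ ⟨k, by linear_combination e⟩, fun e => h₄ ⟨k, by linear_combination e⟩⟩
  · have hp : IsSwapPair (2 * n + 2) x y :=
      ⟨hd, fun h => hd ((dvd_sub hs h).trans (dvd_of_eq (by ring))),
        fun h => hd ((dvd_sub h hs).trans (dvd_of_eq (by ring)))⟩
    obtain ⟨s, hs'⟩ := hs
    have hnx : ∀ k, t (-x + k * (2 * n + 2)) = -y + k * (2 * n + 2) := fun k => by
      rw [show -x + k * (2 * n + 2) = y + (k - s) * (2 * n + 2) by linear_combination -hs', hy]
      linear_combination hs'
    have hny : ∀ k, t (-y + k * (2 * n + 2)) = -x + k * (2 * n + 2) := fun k => by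
      rw [show -y + k * (2 * n + 2) = x + (k - s) * (2 * n + 2) by linear_combination -hs', hx]
      linear_combination hs'
    refine ⟨x, y, hp, eq_classSwap hp hx hy hnx hny fun z h₁ h₂ _ _ => hfix z fun k => ?_,
      .inr ⟨⟨s, hs'⟩, hc⟩⟩
    exact ⟨fun e => h₁ ⟨k, by linear_combination e⟩, fun e => h₂ ⟨k, by linear_combination e⟩⟩

theorem isAffCPerm (ht : IsAffCTransp n t c) : IsAffCPerm n t := by
  obtain ⟨x, y, hp, ht, -⟩ := ht.exists_classSwap
  exact ⟨fun z => by rw [ht, classSwap_neg hp], fun z => by rw [ht, classSwap_add_self]⟩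

theorem inv (ht : IsAffCTransp n t c) : IsAffCTransp n t⁻¹ c := by
  simp only [IsAffCTransp, Equiv.Perm.inv_eq_iff_eq, eq_comm (a := _ + _), eq_comm (b := t _)]
  rcases ht with ⟨x, y, hxy, hd, hs, hx, hy, hnx, hny, hfix, hc⟩ |
    ⟨x, y, hxy, hs, hd, hn, hx, hy, hfix, hc⟩
  · exact Or.inl ⟨x, y, hxy, hd, hs, hy, hx, hny, hnx, hfix, hc⟩
  · exact Or.inr ⟨x, y, hxy, hs, hd, hn, hy, hx, hfix, hc⟩

theorem sum_natAbs_apply_sub_le (ht : IsAffCTransp n t c) {v : Equiv.Perm ℤ}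
    (hv : IsAffCPerm n v) : ∑ i ∈ Icc 1 (n : ℤ), (t (v i) - v i).natAbs ≤ 2 * c := by
  obtain ⟨x, y, -, ht, hc⟩ := ht.exists_classSwap
  set N : ℤ := 2 * n + 2
  have hmoved : ∑ i ∈ Icc 1 (n : ℤ), (t (v i) - v i).natAbs ≤ (y - x).natAbs *
      #{i ∈ Icc 1 (n : ℤ) | (N ∣ v i - x ∨ N ∣ v i + y) ∨ (N ∣ v i - y ∨ N ∣ v i + x)} := by
    rw [card_filter, mul_sum, ht]
    exact sum_le_sum fun i _ => natAbs_classSwap_sub_le N x y (v i)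
  rcases hc with hc | ⟨hs, hc⟩
  · have hcard : #{i ∈ Icc 1 (n : ℤ) |
        (N ∣ v i - x ∨ N ∣ v i + y) ∨ (N ∣ v i - y ∨ N ∣ v i + x)} ≤ 1 + 1 := by
      rw [filter_congr fun i _ => show _ ↔ (N ∣ v i - x ∨ N ∣ v i + x) ∨
        (N ∣ v i - y ∨ N ∣ v i + y) by tauto, filter_or]
      exact (card_union_le _ _).trans
        (add_le_add (hv.card_filter_dvd_le_one x) (hv.card_filter_dvd_le_one y))
    calc _ ≤ (y - x).natAbs * (1 + 1) := hmoved.trans (Nat.mul_le_mul_left _ hcard)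
      _ = 2 * c := by omega
  · have e₁ : ∀ z, N ∣ z + y ↔ N ∣ z - x := fun z => by
      rw [show z + y = z - x + (x + y) by ring]
      exact dvd_add_left hs
    have e₂ : ∀ z, N ∣ z - y ↔ N ∣ z + x := fun z => by
      rw [show z + x = z - y + (x + y) by ring]
      exact (dvd_add_left hs).symm
    have hcard : #{i ∈ Icc 1 (n : ℤ) |
        (N ∣ v i - x ∨ N ∣ v i + y) ∨ (N ∣ v i - y ∨ N ∣ v i + x)} ≤ 1 := by
      simp only [e₁, e₂, or_self]
      exact hv.card_filter_dvd_le_one x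
    calc _ ≤ (y - x).natAbs * 1 := hmoved.trans (Nat.mul_le_mul_left _ hcard)
      _ = 2 * c := by omega

end IsAffCTransp

theorem tvdAffC_mul_le {n : ℕ} {t v : Equiv.Perm ℤ} {c : ℕ} (ht : IsAffCTransp n t c)
    (hv : IsAffCPerm n v) : tvdAffC n (t * v) ≤ 2 * c + tvdAffC n v := by
  unfold tvdAffC
  calc ∑ i ∈ Icc 1 (n : ℤ), ((t * v) i - i).natAbs
      ≤ ∑ i ∈ Icc 1 (n : ℤ), ((t (v i) - v i).natAbs + (v i - i).natAbs) :=
        sum_le_sum fun i _ => by simpa using Int.natAbs_add_le (t (v i) - v i) (v i - i)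
    _ ≤ 2 * c + ∑ i ∈ Icc 1 (n : ℤ), (v i - i).natAbs := by
        rw [sum_add_distrib]
        gcongr
        exact ht.sum_natAbs_apply_sub_le hv

theorem tvdAffC_list_prod_le {n : ℕ} :
    ∀ L : List (Equiv.Perm ℤ × ℕ), (∀ p ∈ L, IsAffCTransp n p.1 p.2) →
      tvdAffC n (L.map Prod.fst).prod ≤ 2 * (L.map Prod.snd).sum
  | [], _ => by simp [tvdAffC]
  | p :: L, hL => by
    have hL' : ∀ q ∈ L, IsAffCTransp n q.1 q.2 := fun q hq => hL q (List.mem_cons_of_mem p hq)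
    have hv : IsAffCPerm n (L.map Prod.fst).prod := (affCPerms n).list_prod_mem fun _ hmem => by
      obtain ⟨q, hq, rfl⟩ := List.mem_map.1 hmem
      exact (hL' q hq).isAffCPerm
    simp only [List.map_cons, List.prod_cons, List.sum_cons]
    calc _ ≤ 2 * p.2 + tvdAffC n (L.map Prod.fst).prod :=
          tvdAffC_mul_le (hL p List.mem_cons_self) hv
      _ ≤ 2 * p.2 + 2 * (L.map Prod.snd).sum := by
          gcongr
          exact tvdAffC_list_prod_le L hL'
      _ = 2 * (p.2 + (L.map Prod.snd).sum) := by ring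

def affCTranspClosure (n : ℕ) : Subgroup (Equiv.Perm ℤ) :=
  Subgroup.closure {t | ∃ c, IsAffCTransp n t c}

theorem affCTranspClosure_le (n : ℕ) : affCTranspClosure n ≤ affCPerms n :=
  Subgroup.closure_le _ |>.2 fun _ ⟨_, ht⟩ => ht.isAffCPerm

theorem exists_list_of_mem_affCTranspClosure {n : ℕ} {w : Equiv.Perm ℤ}
    (hw : w ∈ affCTranspClosure n) :
    ∃ L : List (Equiv.Perm ℤ × ℕ), (∀ p ∈ L, IsAffCTransp n p.1 p.2) ∧
      (L.map Prod.fst).prod = w := by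
  induction hw using Subgroup.closure_induction with
  | mem t ht =>
    obtain ⟨c, ht⟩ := ht
    exact ⟨[(t, c)], by simpa using ht, by simp⟩
  | one => exact ⟨[], by simp, by simp⟩
  | mul u v _ _ hu hv =>
    obtain ⟨L₁, hL₁, rfl⟩ := hu
    obtain ⟨L₂, hL₂, rfl⟩ := hv
    exact ⟨L₁ ++ L₂, fun p hp => (List.mem_append.1 hp).elim (hL₁ p) (hL₂ p), by simp⟩
  | inv u _ hu =>
    obtain ⟨L, hL, rfl⟩ := hu
    refine ⟨(L.map fun p => (p.1⁻¹, p.2)).reverse, fun p hp => ?_, ?_⟩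
    · obtain ⟨q, hq, rfl⟩ := List.mem_map.1 (List.mem_reverse.1 hp)
      exact (hL q hq).inv
    · simp [List.prod_inv_reverse, Function.comp_def]

section ClassSwapPerm

variable {n : ℕ} {x y : ℤ}

theorem isAffCTransp_classSwapPerm_of_dvd (hp : IsSwapPair (2 * n + 2) x y) (hlt : x < y)
    (hs : 2 * (n : ℤ) + 2 ∣ x + y) : IsAffCTransp n (classSwapPerm hp) ((y - x) / 2).toNat := by
  obtain ⟨s, hs'⟩ := hs
  refine .inr ⟨x, y, hlt, ⟨s, hs'⟩, hp.1, fun ⟨q, hq⟩ => hp.2.1 ⟨q, by rw [hq]; ring⟩,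
    fun k => ?_, fun k => ?_, fun z hz => ?_, ?_⟩
  · rw [classSwapPerm_apply, classSwap_of_left (.inl ⟨k, by ring⟩)]
    ring
  · rw [classSwapPerm_apply, classSwap_of_right hp (.inl ⟨k, by ring⟩)]
    ring
  · refine classSwap_of_not ?_ ?_ <;> rintro (⟨k, hk⟩ | ⟨k, hk⟩)
    · exact (hz k).1 (by linear_combination hk)
    · exact (hz (k - s)).1 (by linear_combination hk - hs')
    · exact (hz k).2 (by linear_combination hk)
    · exact (hz (k - s)).2 (by linear_combination hk - hs')
  · have : x + y = 2 * ((n + 1) * s) := by rw [hs']; ring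
    omega

theorem isAffCTransp_classSwapPerm_of_not_dvd (hp : IsSwapPair (2 * n + 2) x y) (hlt : x < y)
    (hs : ¬2 * (n : ℤ) + 2 ∣ x + y) : IsAffCTransp n (classSwapPerm hp) (y - x).toNat := by
  refine .inl ⟨x, y, hlt, hp.1, by rwa [add_comm y x], fun k => ?_, fun k => ?_, fun k => ?_,
    fun k => ?_, fun z hz => ?_, by omega⟩
  · rw [classSwapPerm_apply, classSwap_of_left (.inl ⟨k, by ring⟩)]
    ring
  · rw [classSwapPerm_apply, classSwap_of_right hp (.inl ⟨k, by ring⟩)]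
    ring
  · rw [classSwapPerm_apply, classSwap_of_right hp (.inr ⟨k, by ring⟩)]
    ring
  · rw [classSwapPerm_apply, classSwap_of_left (.inr ⟨k, by ring⟩)]
    ring
  · refine classSwap_of_not ?_ ?_ <;> rintro (⟨k, hk⟩ | ⟨k, hk⟩)
    · exact (hz k).1 (by linear_combination hk)
    · exact (hz k).2.2.2 (by linear_combination hk)
    · exact (hz k).2.1 (by linear_combination hk)
    · exact (hz k).2.2.1 (by linear_combination hk)

theorem classSwapPerm_mem_affCTranspClosure (hp : IsSwapPair (2 * n + 2) x y) (hne : x ≠ y) :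
    classSwapPerm hp ∈ affCTranspClosure n := by
  wlog hlt : x < y generalizing x y
  · rw [show classSwapPerm hp = classSwapPerm hp.symm from
      Equiv.ext fun z => congrFun (classSwap_comm hp).symm z]
    exact this hp.symm hne.symm (by omega)
  refine Subgroup.subset_closure ?_
  by_cases hs : 2 * (n : ℤ) + 2 ∣ x + y
  · exact ⟨_, isAffCTransp_classSwapPerm_of_dvd hp hlt hs⟩
  · exact ⟨_, isAffCTransp_classSwapPerm_of_not_dvd hp hlt hs⟩

end ClassSwapPerm

theorem exists_mem_affCTranspClosure_fixing {n : ℕ} {w : Equiv.Perm ℤ} (hw : IsAffCPerm n w)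
    {i : ℤ} (hi : 1 ≤ i) (hin : i ≤ n) (hfix : ∀ j, 1 ≤ j → j < i → w j = j) :
    ∃ u ∈ affCTranspClosure n, w (u i) = i ∧ ∀ j, 1 ≤ j → j < i → u j = j := by
  obtain ⟨b, hwb⟩ : ∃ b, w b = i := ⟨w⁻¹ i, by simp⟩
  have hi2 : ¬2 * (n : ℤ) + 2 ∣ i + i := not_dvd_of_lt (by omega) (by omega) (by omega)
  have hb2 : ¬2 * (n : ℤ) + 2 ∣ b + b := by rwa [← hw.dvd_add_iff, hwb]
  have avoid_i : ∀ j, 1 ≤ j → j < i → ¬2 * (n : ℤ) + 2 ∣ j - i ∧ ¬2 * (n : ℤ) + 2 ∣ j + i :=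
    fun j h1 h2 => ⟨not_dvd_of_lt (by omega) (by omega) (by omega),
      not_dvd_of_lt (by omega) (by omega) (by omega)⟩
  have avoid_b : ∀ j, 1 ≤ j → j < i → ¬2 * (n : ℤ) + 2 ∣ j - b ∧ ¬2 * (n : ℤ) + 2 ∣ j + b := by
    intro j h1 h2
    rw [← hw.dvd_sub_iff, ← hw.dvd_add_iff, hfix j h1 h2, hwb]
    exact avoid_i j h1 h2
  by_cases hbi : b = i
  · exact ⟨1, one_mem _, by simpa [hbi] using hwb, fun j _ _ => rfl⟩
  by_cases hd : 2 * (n : ℤ) + 2 ∣ b - i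
  · -- `b ≡ i`: go through `-i`, since `i ↦ b` is not a transposition
    have hp₁ : IsSwapPair (2 * n + 2) i (-i) :=
      ⟨not_dvd_of_lt (by omega) (by omega) (by omega), hi2,
        not_dvd_of_lt (by omega) (by omega) (by omega)⟩
    have hp₂ : IsSwapPair (2 * n + 2) (-i) b :=
      ⟨fun h => hi2 ((dvd_sub h hd).trans (dvd_of_eq (by ring))),
        not_dvd_of_lt (by omega) (by omega) (by omega), hb2⟩
    refine ⟨classSwapPerm hp₂ * classSwapPerm hp₁,
      mul_mem (classSwapPerm_mem_affCTranspClosure hp₂ fun h => hp₂.1 (by rw [← h]; simp))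
        (classSwapPerm_mem_affCTranspClosure hp₁ (by omega)), ?_, fun j h1 h2 => ?_⟩
    · simp [classSwapPerm_apply, classSwap_apply_left, hwb]
    · have hi' := avoid_i j h1 h2
      have hni' : ¬2 * (n : ℤ) + 2 ∣ j - -i ∧ ¬2 * (n : ℤ) + 2 ∣ j + -i := by
        simpa [and_comm, ← sub_eq_add_neg] using hi'
      rw [Equiv.Perm.mul_apply, classSwapPerm_apply, classSwapPerm_apply,
        classSwap_eq_self hi' hni', classSwap_eq_self hni' (avoid_b j h1 h2)]
  · have hp : IsSwapPair (2 * n + 2) i b := ⟨hd, hi2, hb2⟩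
    refine ⟨classSwapPerm hp, classSwapPerm_mem_affCTranspClosure hp (Ne.symm hbi), ?_,
      fun j h1 h2 => ?_⟩
    · rw [classSwapPerm_apply, classSwap_apply_left, hwb]
    · exact classSwap_eq_self (avoid_i j h1 h2) (avoid_b j h1 h2)

theorem mem_affCTranspClosure {n : ℕ} {w : Equiv.Perm ℤ} (hw : IsAffCPerm n w) :
    w ∈ affCTranspClosure n := by
  suffices h : ∀ m ≤ n, ∀ w, IsAffCPerm n w → (∀ j : ℤ, 1 ≤ j → j ≤ m → w j = j) →
      w ∈ affCTranspClosure n from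
    h 0 n.zero_le w hw fun j h1 h2 => by omega
  intro m hm
  induction hm using Nat.decreasingInduction with
  | self => exact fun w hw h => hw.eq_one_of_forall_apply_eq h ▸ one_mem _
  | of_succ k hk ih =>
    intro w hw h
    obtain ⟨u, hu, hwu, hufix⟩ := exists_mem_affCTranspClosure_fixing hw (i := k + 1)
      (by omega) (by omega) fun j h1 h2 => h j h1 (by omega)
    have hwu' : w * u ∈ affCTranspClosure n := by
      refine ih (w * u) ((affCPerms n).mul_mem hw (affCTranspClosure_le n hu)) fun j h1 h2 => ?_
      rcases (show j < k + 1 ∨ j = k + 1 by omega) with hj | rfl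
      · rw [Equiv.Perm.mul_apply, hufix j h1 hj, h j h1 (by omega)]
      · exact_mod_cast hwu
    simpa using mul_mem hwu' (inv_mem hu)

theorem exists_list_costAffC_eq {n : ℕ} {w : Equiv.Perm ℤ} (hw : IsAffCPerm n w) :
    ∃ L : List (Equiv.Perm ℤ × ℕ), (∀ p ∈ L, IsAffCTransp n p.1 p.2) ∧
      (L.map Prod.fst).prod = w ∧ costAffC n w = (L.map Prod.snd).sum := by
  obtain ⟨L, hL, hLw⟩ := exists_list_of_mem_affCTranspClosure (mem_affCTranspClosure hw)
  have hne : {c : ℕ | ∃ L : List (Equiv.Perm ℤ × ℕ), (∀ p ∈ L, IsAffCTransp n p.1 p.2) ∧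
      (L.map Prod.fst).prod = w ∧ c = (L.map Prod.snd).sum}.Nonempty := ⟨_, L, hL, hLw, rfl⟩
  exact Nat.sInf_mem hne

/-- For every affine signed permutation `w ∈ S̃^C_n`, the cost of `w` is at least
half of its total displacement: `$(w) ≥ tvd(w)/2`. -/
theorem cost_ge_half_tvd_affineC (n : ℕ) (w : Equiv.Perm ℤ) (hw : IsAffCPerm n w) :
    tvdAffC n w ≤ 2 * costAffC n w := by
  obtain ⟨L, hL, rfl, hcost⟩ := exists_list_costAffC_eq hw
  rw [hcost]
  exact tvdAffC_list_prod_le L hL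
end

section
/- If w is a signed permutation in the hyperoctahedral group S^B_n that is not the identity, then there exist x, y ∈ {±1,…,±n} such that w(x) ≥ y > x ≥ w(y). -/
/-- If `w ∈ S^B_n` is not the identity, then there exist `x, y ∈ {±1,…,±n}` with
`w(x) ≥ y > x ≥ w(y)`. -/
theorem exists_good_pair_typeB (n : ℕ) (w : Equiv.Perm ℤ)
    (hw : IsSignedPerm n w) (hne : w ≠ 1) :
    ∃ x y : ℤ, x ≠ 0 ∧ y ≠ 0 ∧ |x| ≤ (n : ℤ) ∧ |y| ≤ (n : ℤ) ∧
      y ≤ w x ∧ x < y ∧ w y ≤ x := by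
  obtain ⟨hodd, hfix⟩ := hw
  have hw0 : w 0 = 0 := by have := hodd 0; simp at this; linarith
  have hex : ∃ i : ℤ, i < w i := by
    have h1 : ∃ a, w a ≠ a := by
      by_contra h; push_neg at h; apply hne; ext a; simp [h a]
    obtain ⟨a, ha⟩ := h1
    rcases lt_or_gt_of_ne ha with h | h
    · exact ⟨-a, by rw [hodd]; omega⟩
    · exact ⟨a, h⟩
  have hbound : ∀ i : ℤ, i < w i → i ∈ Finset.Icc (-(n:ℤ)) (n:ℤ) := by
    intro i hi
    simp only [Finset.mem_Icc]
    by_contra h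
    have hn : (n:ℤ) < |i| := by rw [lt_abs]; omega
    rw [hfix i hn] at hi; omega
  set S := (Finset.Icc (-(n:ℤ)) (n:ℤ)).filter (fun i => i < w i) with hS
  have hSne : S.Nonempty := by
    obtain ⟨i, hi⟩ := hex
    exact ⟨i, Finset.mem_filter.mpr ⟨hbound i hi, hi⟩⟩
  set x := S.max' hSne with hxdef
  have hxS : x ∈ S := S.max'_mem hSne
  rw [hS, Finset.mem_filter, Finset.mem_Icc] at hxS
  have hx : x < w x := hxS.2
  have hxmax : ∀ y, x < y → w y ≤ y := by
    intro y hy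
    by_contra h; push_neg at h
    have hyS : y ∈ S := Finset.mem_filter.mpr ⟨hbound y h, h⟩
    have := S.le_max' y hyS; omega
  have hey : ∃ y ∈ Finset.Ioc x (w x), w y ≤ x := by
    by_contra h; push_neg at h
    have hmap : ∀ y ∈ Finset.Ioc x (w x), w y ∈ Finset.Ioc x (w x) := by
      intro y hy
      have hy' := Finset.mem_Ioc.mp hy
      exact Finset.mem_Ioc.mpr ⟨h y hy, le_trans (hxmax y hy'.1) hy'.2⟩
    have hinj : Set.InjOn w (Finset.Ioc x (w x)) := fun a _ b _ hab => w.injective hab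
    have himg : (Finset.Ioc x (w x)).image w = Finset.Ioc x (w x) := by
      apply Finset.eq_of_subset_of_card_le
      · intro z hz
        obtain ⟨y, hy, rfl⟩ := Finset.mem_image.mp hz
        exact hmap y hy
      · rw [Finset.card_image_of_injOn hinj]
    have hwx : w x ∈ (Finset.Ioc x (w x)).image w := by
      rw [himg]; exact Finset.mem_Ioc.mpr ⟨hx, le_refl _⟩
    obtain ⟨z, hz, hzx⟩ := Finset.mem_image.mp hwx
    have hzeq : z = x := w.injective hzx
    subst hzeq
    have := Finset.mem_Ioc.mp hz; omega
  obtain ⟨y, hyT, hwy⟩ := hey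
  obtain ⟨hy1, hy2⟩ := Finset.mem_Ioc.mp hyT
  refine ⟨x, y, ?_, ?_, ?_, ?_, hy2, hy1, hwy⟩
  · intro h; rw [h, hw0] at hx; omega
  · intro h; rw [h, hw0] at hwy; omega
  · rw [abs_le]; exact hxS.1
  · rw [abs_le]
    by_contra h
    have hn : (n:ℤ) < |y| := by rw [lt_abs]; omega
    rw [hfix y hn] at hwy; omega
end

section
/- If w is an affine signed permutation in the group S̃^C_n that is not the identity, then there exist integers x and y with x ≢ y (mod 2n+2), neither x nor y a multiple of n+1, such that w(x) ≥ y > x ≥ w(y). -/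
theorem Function.Periodic.exists_forall_apply_le {α : Type*} [LinearOrder α] {f : ℤ → α}
    {c : ℤ} (hf : Function.Periodic f c) (hc : 0 < c) : ∃ x, ∀ y, f y ≤ f x := by
  obtain ⟨x, -, hx⟩ := (Set.Ico 0 c).exists_max_image f (Set.finite_Ico 0 c) ⟨0, le_rfl, hc⟩
  refine ⟨x, fun y => ?_⟩
  obtain ⟨z, hz, hyz⟩ := hf.exists_mem_Ico₀ hc y
  exact hyz ▸ hx z hz

namespace IsAffCPerm

variable {n : ℕ} {w : Equiv.Perm ℤ}

theorem periodic_apply_sub_self (hw : IsAffCPerm n w) :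
    Function.Periodic (fun i => w i - i) (2 * (n : ℤ) + 2) := by
  intro i
  simp only [hw.2]
  ring

theorem apply_add_int_mul (hw : IsAffCPerm n w) (i k : ℤ) :
    w (i + k * (2 * n + 2)) = w i + k * (2 * n + 2) := by
  have := hw.periodic_apply_sub_self.int_mul k i
  rw [Int.cast_id] at this
  linarith

theorem apply_neg_sub_neg (hw : IsAffCPerm n w) (i : ℤ) : w (-i) - -i = -(w i - i) := by
  rw [hw.1]
  ring

theorem apply_eq_self_of_dvd (hw : IsAffCPerm n w) {j : ℤ} (hj : (n + 1 : ℤ) ∣ j) :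
    w j = j := by
  obtain ⟨k, rfl⟩ := hj
  have h := hw.apply_add_int_mul (-((n + 1) * k)) k
  rw [show -((n + 1) * k) + k * (2 * n + 2) = (n + 1) * k by ring, hw.1] at h
  linarith

theorem exists_lt_apply (hw : IsAffCPerm n w) (hne : w ≠ 1) : ∃ a, a < w a := by
  obtain ⟨a, ha⟩ : ∃ a, w a ≠ a := by
    by_contra! h
    exact hne (Equiv.ext h)
  rcases ha.lt_or_gt with h | h
  · exact ⟨-a, by rw [hw.1]; omega⟩
  · exact ⟨a, h⟩

theorem mapsTo_Ioo_of_mapsTo_Ioi (hw : IsAffCPerm n w) {x : ℤ}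
    (h : Set.MapsTo w (Set.Ioi x) (Set.Ioi x)) (k : ℤ) :
    Set.MapsTo w (Set.Ioo x (-x + k * (2 * n + 2))) (Set.Ioo x (-x + k * (2 * n + 2))) := by
  rintro j ⟨hxj, hjm⟩
  have hrefl : w (-j + k * (2 * n + 2)) = -w j + k * (2 * n + 2) := by
    rw [hw.apply_add_int_mul, hw.1]
  have : x < w (-j + k * (2 * n + 2)) := h (by simp only [Set.mem_Ioi]; linarith)
  exact ⟨h hxj, by linarith⟩

theorem exists_lt_apply_le (hw : IsAffCPerm n w) {x : ℤ} (hx : x < w x) :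
    ∃ y, x < y ∧ w y ≤ x := by
  by_contra! h
  obtain ⟨k, hk⟩ : ∃ k : ℤ, x + w x < k * (2 * n + 2) :=
    ⟨|x + w x| + 1, by nlinarith [le_abs_self (x + w x), abs_nonneg (x + w x)]⟩
  set I := Set.Ioo x (-x + k * (2 * n + 2))
  have hmaps : Set.MapsTo w I I := hw.mapsTo_Ioo_of_mapsTo_Ioi h k
  have hbij : Set.BijOn w I I :=
    ((Set.finite_Ioo _ _).injOn_iff_bijOn_of_mapsTo hmaps).1 w.injective.injOn
  obtain ⟨j, hjI, hj⟩ := hbij.surjOn (show w x ∈ I from ⟨hx, by linarith⟩)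
  exact (w.injective hj ▸ hjI.1).false

end IsAffCPerm

/-- If `w ∈ S̃^C_n` is not the identity, then there exist integers `x, y` with
`x ≢ y (mod 2n+2)`, neither `x` nor `y` a multiple of `n+1`, such that
`w(x) ≥ y > x ≥ w(y)`. -/
theorem exists_good_pair_affineC (n : ℕ) (w : Equiv.Perm ℤ)
    (hw : IsAffCPerm n w) (hne : w ≠ 1) :
    ∃ x y : ℤ, ¬ ((2 * (n : ℤ) + 2) ∣ (y - x)) ∧
      ¬ (((n : ℤ) + 1) ∣ x) ∧ ¬ (((n : ℤ) + 1) ∣ y) ∧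
      y ≤ w x ∧ x < y ∧ w y ≤ x := by
  obtain ⟨x, hmax⟩ := hw.periodic_apply_sub_self.exists_forall_apply_le (by positivity)
  obtain ⟨a, ha⟩ := hw.exists_lt_apply hne
  have hx : x < w x := by linarith [hmax a]
  obtain ⟨y, hxy, hyx⟩ := hw.exists_lt_apply_le hx
  refine ⟨x, y, ?_, fun h => ?_, fun h => ?_, ?_, hxy, hyx⟩
  · rintro ⟨k, hk⟩
    have := hw.apply_add_int_mul x k
    rw [show x + k * (2 * n + 2) = y by linarith] at this
    linarith
  · linarith [hw.apply_eq_self_of_dvd h]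
  · linarith [hw.apply_eq_self_of_dvd h]
  · linarith [hmax (-y), hw.apply_neg_sub_neg y]
end

section
/- Let w be a permutation of {1,…,n} and suppose x, y ∈ {1,…,n} satisfy w(x) ≥ y > x ≥ w(y). Then tvd(w ∘ (x y)) = tvd(w) − 2(y − x), where (x y) is the transposition exchanging x and y. -/
/-- If `w` is a permutation of `{1,…,n}` and `x, y` satisfy `w(x) ≥ y > x ≥ w(y)`,
then `tvd(w ∘ (x y)) = tvd(w) − 2(y − x)`. -/
theorem tvd_peel_typeA (n : ℕ) (w : Equiv.Perm (Fin n)) (x y : Fin n)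
    (h1 : y ≤ w x) (h2 : x < y) (h3 : w y ≤ x) :
    (tvdA n (w * Equiv.swap x y) : ℤ) = (tvdA n w : ℤ) - 2 * (((y : ℕ) : ℤ) - ((x : ℕ) : ℤ)) := by
  have hxy : x ≠ y := ne_of_lt h2
  have h1' : ((y : ℕ) : ℤ) ≤ ((w x : ℕ) : ℤ) := by exact_mod_cast (Fin.le_def.mp h1)
  have h2' : ((x : ℕ) : ℤ) < ((y : ℕ) : ℤ) := by exact_mod_cast (Fin.lt_def.mp h2)
  have h3' : ((w y : ℕ) : ℤ) ≤ ((x : ℕ) : ℤ) := by exact_mod_cast (Fin.le_def.mp h3)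
  set F : Fin n → ℤ := fun i =>
    |(((w * Equiv.swap x y) i : ℕ) : ℤ) - ((i : ℕ) : ℤ)| - |(((w i : ℕ) : ℤ) - ((i : ℕ) : ℤ))|
    with hF
  have hcast : ∀ (u : Equiv.Perm (Fin n)), (tvdA n u : ℤ) =
      ∑ i : Fin n, |(((u i : ℕ) : ℤ) - ((i : ℕ) : ℤ))| := by
    intro u
    rw [tvdA, Nat.cast_sum]
    exact Finset.sum_congr rfl fun i _ => (Int.abs_eq_natAbs _).symm
  have hsum : ∑ i : Fin n, F i =
      (tvdA n (w * Equiv.swap x y) : ℤ) - (tvdA n w : ℤ) := by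
    rw [hcast, hcast, ← Finset.sum_sub_distrib]
  have hzero : ∀ i ∈ Finset.univ, i ∉ ({x, y} : Finset (Fin n)) → F i = 0 := by
    intro i _ hi
    simp only [Finset.mem_insert, Finset.mem_singleton, not_or] at hi
    simp [hF, Equiv.Perm.mul_apply, Equiv.swap_apply_of_ne_of_ne hi.1 hi.2]
  have hpair : ∑ i : Fin n, F i = F x + F y := by
    rw [← Finset.sum_subset (Finset.subset_univ ({x, y} : Finset (Fin n))) hzero,
      Finset.sum_pair hxy]
  have hFx : F x = (((x : ℕ) : ℤ) - ((w y : ℕ) : ℤ)) - (((w x : ℕ) : ℤ) - ((x : ℕ) : ℤ)) := by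
    simp only [hF, Equiv.Perm.mul_apply, Equiv.swap_apply_left]
    rw [abs_of_nonpos (by linarith), abs_of_nonneg (by linarith)]
    ring
  have hFy : F y = (((w x : ℕ) : ℤ) - ((y : ℕ) : ℤ)) - (((y : ℕ) : ℤ) - ((w y : ℕ) : ℤ)) := by
    simp only [hF, Equiv.Perm.mul_apply, Equiv.swap_apply_right]
    rw [abs_of_nonneg (by linarith), abs_of_nonpos (by linarith)]
    ring
  have := hpair
  rw [hsum, hFx, hFy] at this
  linarith
end
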